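/- arXiv:1812.09726 — 6 statements merged into one kernel-verified Lean document; each statement's English description precedes it below -/
import Mathlib

section
/- Let p ≥ 5 be prime and f : ℤ/pℤ → ℂ given by f(x) = e^{2πi x³/p}. Then the Gowers U³-norm of f satisfies ‖f‖_{U³} ≤ (2/p)^{1/8}. -/
/-- Multiplicative derivative of a scalar function on a finite abelian group. -/
def mDeriv {Γ : Type*} [AddCommGroup Γ] (f : Γ → ℂ) (h : Γ) : Γ → ℂ :=
  fun x => (starRingEnd ℂ) (f x) * f (x + h)

open Finset

theorem stmt_2 (p : ℕ) [hp : Fact p.Prime] (hp5 : 5 ≤ p)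
    (f : ZMod p → ℂ)
    (hf : ∀ x : ZMod p, f x = Complex.exp (2 * Real.pi * Complex.I * ((x ^ 3).val : ℕ) / p)) :
    (‖(1 / (p : ℂ) ^ 4) *
        ∑ x : ZMod p, ∑ h₁ : ZMod p, ∑ h₂ : ZMod p, ∑ h₃ : ZMod p,
          mDeriv (mDeriv (mDeriv f h₁) h₂) h₃ x‖) ^ ((1 : ℝ) / 8)
      ≤ (2 / p) ^ ((1 : ℝ) / 8) := by
  have hp0 : (0 : ℝ) < p := by positivity
  set ψ : AddChar (ZMod p) ℂ := ZMod.stdAddChar with hψ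
  have hfψ : ∀ x : ZMod p, f x = ψ (x ^ 3) := by
    intro x
    rw [hf, hψ, ZMod.stdAddChar_apply, ZMod.toCircle_apply]
  have hconj : ∀ a : ZMod p, (starRingEnd ℂ) (ψ a) = ψ (-a) := by
    intro a
    rw [AddChar.map_neg_eq_inv, hψ, ZMod.stdAddChar_apply]
    exact (Circle.coe_inv_eq_conj _).symm
  have key : ∀ h₁ h₂ h₃ x : ZMod p,
      mDeriv (mDeriv (mDeriv f h₁) h₂) h₃ x = ψ (6 * h₁ * h₂ * h₃) := by
    intro h₁ h₂ h₃ x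
    simp only [mDeriv, hfψ, map_mul, Complex.conj_conj, hconj, ← AddChar.map_add_eq_mul]
    congr 1
    ring
  have hpn : p ≠ 0 := by omega
  have orth : ∀ t : ZMod p, ∑ i : ZMod p, ψ (t * i) = if t = 0 then (p : ℂ) else 0 := by
    intro t
    split_ifs with h
    · simp [h, ZMod.card]
    · exact AddChar.sum_eq_zero_of_ne_one (ZMod.isPrimitive_stdAddChar p h)
  have h6 : (6 : ZMod p) ≠ 0 := by
    have : ¬ ((6 : ℕ) : ZMod p) = 0 := by
      rw [ZMod.natCast_eq_zero_iff]
      intro h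
      have hle : p ≤ 6 := Nat.le_of_dvd (by norm_num) h
      interval_cases p
      · norm_num at h
      · exact absurd hp.out (by norm_num)
    simpa using this
  have hsum3 : ∀ h₁ h₂ : ZMod p, (∑ h₃ : ZMod p, ψ (6 * h₁ * h₂ * h₃))
      = if h₁ = 0 ∨ h₂ = 0 then (p : ℂ) else 0 := by
    intro h₁ h₂
    rw [orth]
    have hc : (6 * h₁ * h₂ = 0) = (h₁ = 0 ∨ h₂ = 0) := by
      rw [eq_iff_iff, mul_eq_zero, mul_eq_zero]
      simp [h6]
    exact if_congr (iff_of_eq hc) rfl rfl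
  have hsum2 : ∀ h₁ : ZMod p, (∑ h₂ : ZMod p, if h₁ = 0 ∨ h₂ = 0 then (p : ℂ) else 0)
      = if h₁ = 0 then (p : ℂ) * p else (p : ℂ) := by
    intro h₁
    by_cases h : h₁ = 0
    · simp [h, Finset.card_univ, ZMod.card, mul_comm]
    · simp [h, Finset.sum_ite_eq', Finset.mem_univ]
  have hsum1 : (∑ h₁ : ZMod p, if h₁ = 0 then (p : ℂ) * p else (p : ℂ))
      = 2 * (p : ℂ) ^ 2 - p := by
    have step : ∀ h₁ : ZMod p, (if h₁ = 0 then (p : ℂ) * p else (p : ℂ))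
        = (p : ℂ) + (if h₁ = 0 then (p : ℂ) * p - p else 0) := by
      intro h₁; split_ifs <;> ring
    simp_rw [step, Finset.sum_add_distrib, Finset.sum_const, Finset.sum_ite_eq',
      Finset.mem_univ, if_true, Finset.card_univ, ZMod.card, nsmul_eq_mul]
    ring
  have hT : (∑ x : ZMod p, ∑ h₁ : ZMod p, ∑ h₂ : ZMod p, ∑ h₃ : ZMod p,
      mDeriv (mDeriv (mDeriv f h₁) h₂) h₃ x) = (p : ℂ) * (2 * (p : ℂ) ^ 2 - p) := by
    simp_rw [key, hsum3, hsum2, hsum1, Finset.sum_const, Finset.card_univ, ZMod.card,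
      nsmul_eq_mul]
  rw [hT]
  have hpc : (p : ℂ) ≠ 0 := Nat.cast_ne_zero.2 hpn
  have heq : (1 / (p : ℂ) ^ 4) * ((p : ℂ) * (2 * (p : ℂ) ^ 2 - p))
      = (((2 * p - 1) / p ^ 2 : ℝ) : ℂ) := by
    push_cast
    field_simp
  have hnn : (0 : ℝ) ≤ (2 * p - 1) / p ^ 2 := by
    have h5 : (5 : ℝ) ≤ p := by exact_mod_cast hp5
    apply div_nonneg _ (by positivity)
    nlinarith
  rw [heq, Complex.norm_real, Real.norm_eq_abs, abs_of_nonneg hnn]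
  apply Real.rpow_le_rpow hnn _ (by norm_num)
  have h5 : (5 : ℝ) ≤ p := by exact_mod_cast hp5
  rw [div_le_div_iff₀ (by positivity) hp0]
  nlinarith
end

section
/- Matrix van der Corput lemma: Let Γ be a finite abelian group, S a finite set, and for each s ∈ S let F_s : Γ → M_d(ℂ). Let B : S → M_d(ℂ) satisfy ‖B(s)‖ ≤ 1 (operator norm) for all s. Then ‖E_{s∈S} E_{x∈Γ} B(s)·F_s(x)‖ ≤ ‖E_{s∈S} E_{x,h∈Γ} F_s(x)* · F_s(x+h)‖^{1/2}. -/
open Matrix Finset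
open scoped Matrix.Norms.L2Operator InnerProductSpace

noncomputable section

variable {d : ℕ}

lemma my_opNorm_le_bound (M : Matrix (Fin d) (Fin d) ℂ) {C : ℝ} (hC : 0 ≤ C)
    (h : ∀ v : EuclideanSpace ℂ (Fin d),
      ‖(WithLp.equiv 2 (Fin d → ℂ)).symm (M *ᵥ v)‖ ≤ C * ‖v‖) : ‖M‖ ≤ C := by
  rw [Matrix.l2_opNorm_def]
  exact ContinuousLinearMap.opNorm_le_bound _ hC h

lemma my_mulVec_norm_sq (A : Matrix (Fin d) (Fin d) ℂ) (v : EuclideanSpace ℂ (Fin d)) :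
    ‖(WithLp.equiv 2 (Fin d → ℂ)).symm (A *ᵥ v)‖ ^ 2
      = RCLike.re (⟪v, (WithLp.equiv 2 (Fin d → ℂ)).symm ((Aᴴ * A) *ᵥ v)⟫_ℂ) := by
  rw [← inner_self_eq_norm_sq (𝕜 := ℂ)]
  congr 1
  have hv : v = (WithLp.equiv 2 (Fin d → ℂ)).symm (WithLp.equiv 2 (Fin d → ℂ) v) := rfl
  conv_rhs => rw [hv]
  erw [EuclideanSpace.inner_toLp_toLp, EuclideanSpace.inner_toLp_toLp]
  rw [star_mulVec, dotProduct_comm, dotProduct_mulVec, vecMul_vecMul, dotProduct_comm _ (star _),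
    dotProduct_mulVec]
  rfl

lemma my_core (S : Type*) [Fintype S] (A B : S → Matrix (Fin d) (Fin d) ℂ)
    (hB : ∀ s, ‖B s‖ ≤ 1) :
    ‖∑ s, B s * A s‖
      ≤ Real.sqrt (Fintype.card S) * Real.sqrt ‖∑ s, (A s)ᴴ * A s‖ := by
  apply my_opNorm_le_bound _ (by positivity)
  intro v
  set P : Matrix (Fin d) (Fin d) ℂ := ∑ s, (A s)ᴴ * A s with hP
  have hsum : ∀ (M : S → Matrix (Fin d) (Fin d) ℂ),
      (WithLp.equiv 2 (Fin d → ℂ)).symm ((∑ s, M s) *ᵥ v)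
        = ∑ s, (WithLp.equiv 2 (Fin d → ℂ)).symm (M s *ᵥ (v : Fin d → ℂ)) := by
    intro M
    have := map_sum (Matrix.mulVec.addMonoidHomLeft (v : Fin d → ℂ)) M univ
    simp only [Matrix.mulVec.addMonoidHomLeft_apply] at this
    rw [show ((∑ s, M s) *ᵥ v : Fin d → ℂ) = ∑ s, M s *ᵥ (v : Fin d → ℂ) from this]
    exact map_sum (WithLp.linearEquiv 2 ℂ (Fin d → ℂ)).symm _ _
  have key : ∀ s, ‖(WithLp.equiv 2 (Fin d → ℂ)).symm ((B s * A s) *ᵥ v)‖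
      ≤ ‖(WithLp.equiv 2 (Fin d → ℂ)).symm (A s *ᵥ v)‖ := by
    intro s
    rw [← Matrix.mulVec_mulVec]
    calc ‖(WithLp.equiv 2 (Fin d → ℂ)).symm (B s *ᵥ (A s *ᵥ v))‖
        ≤ ‖B s‖ * ‖(WithLp.equiv 2 (Fin d → ℂ)).symm (A s *ᵥ v)‖ :=
          Matrix.l2_opNorm_mulVec (B s) ((WithLp.equiv 2 (Fin d → ℂ)).symm (A s *ᵥ v))
      _ ≤ 1 * ‖(WithLp.equiv 2 (Fin d → ℂ)).symm (A s *ᵥ v)‖ :=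
          mul_le_mul_of_nonneg_right (hB s) (norm_nonneg _)
      _ = _ := one_mul _
  have h4 : ∑ s, ‖(WithLp.equiv 2 (Fin d → ℂ)).symm (A s *ᵥ v)‖ ^ 2
      = RCLike.re (⟪v, (WithLp.equiv 2 (Fin d → ℂ)).symm (P *ᵥ v)⟫_ℂ) := by
    simp_rw [my_mulVec_norm_sq]
    rw [hP, hsum, inner_sum, map_sum]
  have h5 : RCLike.re (⟪v, (WithLp.equiv 2 (Fin d → ℂ)).symm (P *ᵥ v)⟫_ℂ)
      ≤ ‖P‖ * ‖v‖ ^ 2 := by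
    calc RCLike.re (⟪v, (WithLp.equiv 2 (Fin d → ℂ)).symm (P *ᵥ v)⟫_ℂ)
        ≤ ‖(⟪v, (WithLp.equiv 2 (Fin d → ℂ)).symm (P *ᵥ v)⟫_ℂ)‖ := RCLike.re_le_norm _
      _ ≤ ‖v‖ * ‖(WithLp.equiv 2 (Fin d → ℂ)).symm (P *ᵥ v)‖ := norm_inner_le_norm _ _
      _ ≤ ‖v‖ * (‖P‖ * ‖v‖) :=
          mul_le_mul_of_nonneg_left (Matrix.l2_opNorm_mulVec P v) (norm_nonneg _)
      _ = ‖P‖ * ‖v‖ ^ 2 := by ring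
  have h3 : ∑ s, ‖(WithLp.equiv 2 (Fin d → ℂ)).symm (A s *ᵥ v)‖
      ≤ Real.sqrt (Fintype.card S) *
        Real.sqrt (∑ s, ‖(WithLp.equiv 2 (Fin d → ℂ)).symm (A s *ᵥ v)‖ ^ 2) := by
    have hcs := sq_sum_le_card_mul_sum_sq
      (s := (univ : Finset S)) (f := fun s => ‖(WithLp.equiv 2 (Fin d → ℂ)).symm (A s *ᵥ v)‖)
    have h0 : (0:ℝ) ≤ ∑ s, ‖(WithLp.equiv 2 (Fin d → ℂ)).symm (A s *ᵥ v)‖ :=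
      Finset.sum_nonneg fun s _ => norm_nonneg _
    calc ∑ s, ‖(WithLp.equiv 2 (Fin d → ℂ)).symm (A s *ᵥ v)‖
        = Real.sqrt ((∑ s, ‖(WithLp.equiv 2 (Fin d → ℂ)).symm (A s *ᵥ v)‖) ^ 2) :=
          (Real.sqrt_sq h0).symm
      _ ≤ Real.sqrt ((Fintype.card S : ℝ) *
            ∑ s, ‖(WithLp.equiv 2 (Fin d → ℂ)).symm (A s *ᵥ v)‖ ^ 2) := by
          apply Real.sqrt_le_sqrt
          simpa [Finset.card_univ] using hcs
      _ = _ := Real.sqrt_mul (by positivity) _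
  calc ‖(WithLp.equiv 2 (Fin d → ℂ)).symm ((∑ s, B s * A s) *ᵥ v)‖
      = ‖∑ s, (WithLp.equiv 2 (Fin d → ℂ)).symm ((B s * A s) *ᵥ (v : Fin d → ℂ))‖ := by
        rw [hsum]
    _ ≤ ∑ s, ‖(WithLp.equiv 2 (Fin d → ℂ)).symm ((B s * A s) *ᵥ (v : Fin d → ℂ))‖ :=
        norm_sum_le _ _
    _ ≤ ∑ s, ‖(WithLp.equiv 2 (Fin d → ℂ)).symm (A s *ᵥ v)‖ :=
        Finset.sum_le_sum fun s _ => key s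
    _ ≤ Real.sqrt (Fintype.card S) *
          Real.sqrt (∑ s, ‖(WithLp.equiv 2 (Fin d → ℂ)).symm (A s *ᵥ v)‖ ^ 2) := h3
    _ ≤ Real.sqrt (Fintype.card S) * Real.sqrt (‖P‖ * ‖v‖ ^ 2) := by
        apply mul_le_mul_of_nonneg_left _ (Real.sqrt_nonneg _)
        exact Real.sqrt_le_sqrt (h4 ▸ h5)
    _ = Real.sqrt (Fintype.card S) * Real.sqrt ‖P‖ * ‖v‖ := by
        rw [Real.sqrt_mul (norm_nonneg _), Real.sqrt_sq (norm_nonneg _)]; ring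

end

theorem stmt_4 (d : ℕ) (Γ : Type*) [AddCommGroup Γ] [Fintype Γ]
    (S : Type*) [Fintype S] [Nonempty S]
    (F : S → Γ → Matrix (Fin d) (Fin d) ℂ)
    (B : S → Matrix (Fin d) (Fin d) ℂ) (hB : ∀ s, ‖B s‖ ≤ 1) :
    ‖((Fintype.card S : ℂ) * (Fintype.card Γ : ℂ))⁻¹ •
        ∑ s : S, ∑ x : Γ, B s * F s x‖
      ≤ ‖((Fintype.card S : ℂ) * ((Fintype.card Γ : ℂ) ^ 2))⁻¹ •
          ∑ s : S, ∑ x : Γ, ∑ h : Γ, (F s x)ᴴ * F s (x + h)‖ ^ ((1 : ℝ) / 2) := by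
  classical
  set n := Fintype.card S with hn
  set m := Fintype.card Γ with hm
  have hn0 : 0 < n := Fintype.card_pos
  have hm0 : 0 < m := Fintype.card_pos
  set G : S → Matrix (Fin d) (Fin d) ℂ := fun s => ∑ x, F s x with hG
  have h1 : ∀ s, ∑ x : Γ, B s * F s x = B s * G s := fun s => (Finset.mul_sum _ _ _).symm
  have h2 : ∀ s, (∑ x : Γ, ∑ h : Γ, (F s x)ᴴ * F s (x + h)) = (G s)ᴴ * G s := by
    intro s
    have hx : ∀ x : Γ, ∑ h : Γ, F s (x + h) = G s := fun x =>
      Equiv.sum_comp (Equiv.addLeft x) (F s)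
    calc ∑ x : Γ, ∑ h : Γ, (F s x)ᴴ * F s (x + h)
        = ∑ x : Γ, (F s x)ᴴ * G s := by
          refine Finset.sum_congr rfl fun x _ => ?_
          rw [← Finset.mul_sum, hx x]
      _ = (G s)ᴴ * G s := by
          rw [← Finset.sum_mul, ← Matrix.conjTranspose_sum]
  simp_rw [h1, h2]
  set X : Matrix (Fin d) (Fin d) ℂ := ∑ s, B s * G s with hX
  set P : Matrix (Fin d) (Fin d) ℂ := ∑ s, (G s)ᴴ * G s with hP
  have key : ‖X‖ ≤ Real.sqrt n * Real.sqrt ‖P‖ := my_core S G B hB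
  have hnorm1 : ‖((n : ℂ) * (m : ℂ))⁻¹ • X‖ = ((n : ℝ) * m)⁻¹ * ‖X‖ := by
    rw [norm_smul]
    simp [norm_inv, norm_mul]
  have hnorm2 : ‖((n : ℂ) * ((m : ℂ)) ^ 2)⁻¹ • P‖ = ((n : ℝ) * (m : ℝ) ^ 2)⁻¹ * ‖P‖ := by
    rw [norm_smul]
    simp [norm_inv, norm_mul, norm_pow]
  rw [hnorm1, hnorm2, ← Real.sqrt_eq_rpow, Real.sqrt_mul (by positivity)]
  have hsq : Real.sqrt (((n : ℝ) * (m : ℝ) ^ 2)⁻¹) = (Real.sqrt n * m)⁻¹ := by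
    rw [Real.sqrt_inv, Real.sqrt_mul (by positivity), Real.sqrt_sq (by positivity)]
  rw [hsq]
  have hss : Real.sqrt n * Real.sqrt n = (n : ℝ) := Real.mul_self_sqrt (by positivity)
  calc ((n : ℝ) * m)⁻¹ * ‖X‖
      ≤ ((n : ℝ) * m)⁻¹ * (Real.sqrt n * Real.sqrt ‖P‖) := by
        apply mul_le_mul_of_nonneg_left key (by positivity)
    _ = (Real.sqrt n * m)⁻¹ * Real.sqrt ‖P‖ := by
        rw [← hss]
        have hs0 : (0:ℝ) < Real.sqrt n := Real.sqrt_pos.mpr (by positivity)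
        rw [Real.sqrt_mul_self hs0.le]
        field_simp
end

section
/- Non-commutative generalized von Neumann inequality: Let Γ be a finite abelian group and A₀, A₁, A₂, A₃ : Γ → M_d(ℂ) maps with ‖A_i(x)‖ ≤ 1 for all i, x, such that for all x, y ∈ Γ and all distinct i, j ∈ {0,1,2,3}, A_i(x) commutes with A_j(y) and A_i(x)* commutes with A_j(y). Then ‖E_{x,y∈Γ} A₀(y)A₁(x)A₂(x+y)A₃(x+2y)‖ ≤ ‖E_{x,h₁,h₂,h₃∈Γ}(Δ_{h₃}Δ_{h₂}Δ_{h₁}A₀)(x)‖^{1/8}, where (Δ_h A)(x) = A(x)*·A(x+h). -/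
open Matrix Finset
open scoped Matrix.Norms.L2Operator

/-- Non-commutative multiplicative derivative of a matrix-valued function. -/
noncomputable def mDerivM {Γ : Type*} [AddCommGroup Γ] {d : ℕ}
    (A : Γ → Matrix (Fin d) (Fin d) ℂ) (h : Γ) : Γ → Matrix (Fin d) (Fin d) ℂ :=
  fun x => (A x)ᴴ * A (x + h)

section CS
variable {H : Type*} [NormedAddCommGroup H] [InnerProductSpace ℂ H] [CompleteSpace H]
  {ι : Type*} [Fintype ι]

local notation "⟪" x ", " y "⟫" => @inner ℂ _ _ x y

private lemma clm_cs (T U : ι → H →L[ℂ] H) :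
    ‖∑ i, T i * U i‖ ^ 2 ≤ ‖∑ i, T i * star (T i)‖ * ‖∑ i, star (U i) * U i‖ := by
  set P := ‖∑ i, T i * star (T i)‖ with hPdef
  set Q := ‖∑ i, star (U i) * U i‖ with hQdef
  have hP : 0 ≤ P := norm_nonneg _
  have hQ : 0 ≤ Q := norm_nonneg _
  set S := ∑ i, T i * U i with hSdef
  have key : ∀ v : H, ‖S v‖ ^ 2 ≤ (P * Q) * ‖v‖ ^ 2 := by
    intro v
    set w := S v with hw
    have h2 : ⟪w, w⟫ = ∑ i, ⟪(U i) v, (ContinuousLinearMap.adjoint (T i)) w⟫ := by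
      have hw' : w = ∑ i, (T i) ((U i) v) := by
        rw [hw, hSdef]; simp [ContinuousLinearMap.sum_apply, ContinuousLinearMap.mul_apply]
      calc ⟪w, w⟫ = ⟪∑ i, (T i) ((U i) v), w⟫ := by rw [← hw']
        _ = ∑ i, ⟪(T i) ((U i) v), w⟫ := sum_inner _ _ _
        _ = ∑ i, ⟪(U i) v, (ContinuousLinearMap.adjoint (T i)) w⟫ :=
            Finset.sum_congr rfl fun i _ =>
              (ContinuousLinearMap.adjoint_inner_right (T i) _ _).symm
    have h3 : ‖⟪w, w⟫‖ ≤ ∑ i, ‖(U i) v‖ * ‖(ContinuousLinearMap.adjoint (T i)) w‖ := by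
      rw [h2]
      exact (norm_sum_le _ _).trans (Finset.sum_le_sum fun i _ => norm_inner_le_norm _ _)
    have h5 : ∑ i, ‖(U i) v‖ ^ 2 ≤ Q * ‖v‖ ^ 2 := by
      have e1 : ∀ i : ι, ‖(U i) v‖ ^ 2
          = RCLike.re ⟪((star (U i) * U i : H →L[ℂ] H)) v, v⟫ := by
        intro i
        rw [ContinuousLinearMap.mul_apply, ContinuousLinearMap.star_eq_adjoint,
          ContinuousLinearMap.adjoint_inner_left]
        exact (inner_self_eq_norm_sq _).symm
      calc ∑ i, ‖(U i) v‖ ^ 2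
          = RCLike.re ⟪(∑ i, star (U i) * U i) v, v⟫ := by
            simp only [e1, ContinuousLinearMap.sum_apply, sum_inner, map_sum]
        _ ≤ ‖⟪(∑ i, star (U i) * U i) v, v⟫‖ := RCLike.re_le_norm _
        _ ≤ ‖(∑ i, star (U i) * U i) v‖ * ‖v‖ := norm_inner_le_norm _ _
        _ ≤ (Q * ‖v‖) * ‖v‖ :=
            mul_le_mul_of_nonneg_right ((∑ i, star (U i) * U i).le_opNorm v) (norm_nonneg _)
        _ = Q * ‖v‖ ^ 2 := by ring
    have h6 : ∑ i, ‖(ContinuousLinearMap.adjoint (T i)) w‖ ^ 2 ≤ P * ‖w‖ ^ 2 := by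
      have e1 : ∀ i : ι, ‖(ContinuousLinearMap.adjoint (T i)) w‖ ^ 2
          = RCLike.re ⟪((T i * star (T i) : H →L[ℂ] H)) w, w⟫ := by
        intro i
        rw [ContinuousLinearMap.mul_apply, ContinuousLinearMap.star_eq_adjoint,
          ← ContinuousLinearMap.adjoint_inner_right]
        exact (inner_self_eq_norm_sq _).symm
      calc ∑ i, ‖(ContinuousLinearMap.adjoint (T i)) w‖ ^ 2
          = RCLike.re ⟪(∑ i, T i * star (T i)) w, w⟫ := by
            simp only [e1, ContinuousLinearMap.sum_apply, sum_inner, map_sum]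
        _ ≤ ‖⟪(∑ i, T i * star (T i)) w, w⟫‖ := RCLike.re_le_norm _
        _ ≤ ‖(∑ i, T i * star (T i)) w‖ * ‖w‖ := norm_inner_le_norm _ _
        _ ≤ (P * ‖w‖) * ‖w‖ :=
            mul_le_mul_of_nonneg_right ((∑ i, T i * star (T i)).le_opNorm w) (norm_nonneg _)
        _ = P * ‖w‖ ^ 2 := by ring
    have h4 : (∑ i, ‖(U i) v‖ * ‖(ContinuousLinearMap.adjoint (T i)) w‖) ^ 2
        ≤ (∑ i, ‖(U i) v‖ ^ 2) * ∑ i, ‖(ContinuousLinearMap.adjoint (T i)) w‖ ^ 2 :=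
      Finset.sum_mul_sq_le_sq_mul_sq _ _ _
    have hww : ‖⟪w, w⟫‖ = ‖w‖ ^ 2 := by
      rw [inner_self_eq_norm_sq_to_K]
      simp [norm_pow]
    have h7 : (‖w‖ ^ 2) ^ 2 ≤ (Q * ‖v‖ ^ 2) * (P * ‖w‖ ^ 2) := by
      calc (‖w‖ ^ 2) ^ 2 = ‖⟪w, w⟫‖ ^ 2 := by rw [hww]
        _ ≤ (∑ i, ‖(U i) v‖ * ‖(ContinuousLinearMap.adjoint (T i)) w‖) ^ 2 := by
            apply pow_le_pow_left₀ (norm_nonneg _) h3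
        _ ≤ (∑ i, ‖(U i) v‖ ^ 2) * ∑ i, ‖(ContinuousLinearMap.adjoint (T i)) w‖ ^ 2 := h4
        _ ≤ (Q * ‖v‖ ^ 2) * (P * ‖w‖ ^ 2) := by
            apply mul_le_mul h5 h6 (Finset.sum_nonneg fun i _ => sq_nonneg _)
              (mul_nonneg hQ (sq_nonneg _))
    rcases eq_or_ne w 0 with h | h
    · rw [h]
      simpa using mul_nonneg (mul_nonneg hP hQ) (sq_nonneg ‖v‖)
    · have hw2 : 0 < ‖w‖ ^ 2 := pow_pos (norm_pos_iff.mpr h) 2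
      nlinarith [hw2]
  have hop : ‖S‖ ≤ Real.sqrt (P * Q) := by
    apply ContinuousLinearMap.opNorm_le_bound _ (Real.sqrt_nonneg _)
    intro v
    have h := Real.sqrt_le_sqrt (key v)
    rwa [Real.sqrt_mul (mul_nonneg hP hQ), Real.sqrt_sq (norm_nonneg _),
      Real.sqrt_sq (norm_nonneg _)] at h
  calc ‖S‖ ^ 2 ≤ Real.sqrt (P * Q) ^ 2 := pow_le_pow_left₀ (norm_nonneg _) hop 2
    _ = P * Q := Real.sq_sqrt (mul_nonneg hP hQ)

private lemma matrix_cs {d : ℕ} (B C : ι → Matrix (Fin d) (Fin d) ℂ) :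
    ‖∑ i, B i * C i‖ ^ 2 ≤ ‖∑ i, B i * (B i)ᴴ‖ * ‖∑ i, (C i)ᴴ * C i‖ := by
  have e1 : toEuclideanCLM (𝕜 := ℂ) (∑ i, B i * C i)
      = ∑ i, toEuclideanCLM (𝕜 := ℂ) (B i) * toEuclideanCLM (𝕜 := ℂ) (C i) := by
    simp [map_sum]
  have e2 : toEuclideanCLM (𝕜 := ℂ) (∑ i, B i * (B i)ᴴ)
      = ∑ i, toEuclideanCLM (𝕜 := ℂ) (B i) * star (toEuclideanCLM (𝕜 := ℂ) (B i)) := by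
    simp [map_sum, ← Matrix.star_eq_conjTranspose, map_star]
  have e3 : toEuclideanCLM (𝕜 := ℂ) (∑ i, (C i)ᴴ * C i)
      = ∑ i, star (toEuclideanCLM (𝕜 := ℂ) (C i)) * toEuclideanCLM (𝕜 := ℂ) (C i) := by
    simp [map_sum, ← Matrix.star_eq_conjTranspose, map_star]
  rw [Matrix.cstar_norm_def, Matrix.cstar_norm_def, Matrix.cstar_norm_def, e1, e2, e3]
  exact clm_cs _ _

end CS

section Helpers

variable {d : ℕ}

/-- `a` commutes with `b` and so does `aᴴ`. -/
private def FCmat (a b : Matrix (Fin d) (Fin d) ℂ) : Prop := Commute a b ∧ Commute aᴴ b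

private lemma FCmat.commute {a b : Matrix (Fin d) (Fin d) ℂ} (h : FCmat a b) : Commute a b := h.1

private lemma FCmat.symm {a b : Matrix (Fin d) (Fin d) ℂ} (h : FCmat a b) : FCmat b a := by
  refine ⟨h.1.symm, ?_⟩
  have := congrArg conjTranspose h.2.eq
  exact (by simpa [Matrix.conjTranspose_mul] using this : bᴴ * a = a * bᴴ)

private lemma FCmat.hL {a b : Matrix (Fin d) (Fin d) ℂ} (h : FCmat a b) : FCmat aᴴ b := by
  refine ⟨h.2, ?_⟩
  simpa using h.1

private lemma FCmat.hR {a b : Matrix (Fin d) (Fin d) ℂ} (h : FCmat a b) : FCmat a bᴴ :=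
  (h.symm.hL).symm

private lemma FCmat.mul_left {a b c : Matrix (Fin d) (Fin d) ℂ} (h1 : FCmat a c)
    (h2 : FCmat b c) : FCmat (a * b) c := by
  refine ⟨h1.1.mul_left h2.1, ?_⟩
  rw [Matrix.conjTranspose_mul]
  exact h2.2.mul_left h1.2

private lemma FCmat.mul_right {a b c : Matrix (Fin d) (Fin d) ℂ} (h1 : FCmat a b)
    (h2 : FCmat a c) : FCmat a (b * c) :=
  (FCmat.mul_left h1.symm h2.symm).symm

private lemma left_comm' {a b c : Matrix (Fin d) (Fin d) ℂ} (h : Commute a b) :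
    a * (b * c) = b * (a * c) := by
  rw [← mul_assoc, h.eq, mul_assoc]

private lemma pair4 (a b a' b' : Matrix (Fin d) (Fin d) ℂ)
    (h1 : Commute bᴴ aᴴ) (h2 : Commute bᴴ a') :
    (a * b)ᴴ * (a' * b') = (aᴴ * a') * (bᴴ * b') := by
  rw [Matrix.conjTranspose_mul, h1.eq, mul_assoc, ← mul_assoc bᴴ a' b', h2.eq,
    mul_assoc, ← mul_assoc]

private lemma pair6 (a b c a' b' c' : Matrix (Fin d) (Fin d) ℂ)
    (h1 : Commute (aᴴ * a') (cᴴ * bᴴ))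
    (h2 : Commute cᴴ (bᴴ * b')) :
    (a * (b * c))ᴴ * (a' * (b' * c')) = (aᴴ * a') * ((bᴴ * b') * (cᴴ * c')) := by
  rw [Matrix.conjTranspose_mul, Matrix.conjTranspose_mul]
  calc cᴴ * bᴴ * aᴴ * (a' * (b' * c'))
      = (cᴴ * bᴴ) * ((aᴴ * a') * (b' * c')) := by simp only [mul_assoc]
    _ = (aᴴ * a') * ((cᴴ * bᴴ) * (b' * c')) := by rw [← mul_assoc, h1.symm.eq, mul_assoc]
    _ = (aᴴ * a') * (cᴴ * ((bᴴ * b') * c')) := by simp only [mul_assoc]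
    _ = (aᴴ * a') * ((bᴴ * b') * (cᴴ * c')) := by rw [← mul_assoc cᴴ, h2.eq]; simp only [mul_assoc]

private lemma norm_sum_le_card' {ι : Type*} [Fintype ι] {E : Type*} [SeminormedAddCommGroup E]
    {M : ι → E} {c : ℝ} (h : ∀ i, ‖M i‖ ≤ c) : ‖∑ i, M i‖ ≤ (Fintype.card ι : ℝ) * c := by
  refine (norm_sum_le _ _).trans ?_
  calc ∑ i, ‖M i‖ ≤ ∑ _i : ι, c := Finset.sum_le_sum fun i _ => h i
    _ = (Fintype.card ι : ℝ) * c := by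
        rw [Finset.sum_const, nsmul_eq_mul, Fintype.card]

private lemma norm_mul_le_one' {a b : Matrix (Fin d) (Fin d) ℂ}
    (ha : ‖a‖ ≤ 1) (hb : ‖b‖ ≤ 1) : ‖a * b‖ ≤ 1 := by
  have := Matrix.l2_opNorm_mul a b
  nlinarith [norm_nonneg a, norm_nonneg b]


private lemma final_arith (N a t1 t2 u : ℝ) (hN0 : 0 < N) (ha0 : 0 ≤ a)
    (hu0 : 0 ≤ u) (hs1 : a ^ 2 ≤ N * t1) (hs2 : t1 ^ 2 ≤ N ^ 2 * t2)
    (hs3 : t2 ^ 2 ≤ N ^ 4 * u) :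
    (N ^ 2)⁻¹ * a ≤ ((N ^ 4)⁻¹ * u) ^ ((1 : ℝ) / 8) := by
  have ht10 : 0 ≤ t1 := by nlinarith [sq_nonneg a, hN0]
  have ht20 : 0 ≤ t2 := by nlinarith [sq_nonneg t1, pow_pos hN0 2]
  have key : ((N ^ 2)⁻¹ * a) ^ (8 : ℕ) ≤ (N ^ 4)⁻¹ * u := by
    have p2 : a ^ 4 ≤ N ^ 2 * (N ^ 2 * t2) := by
      calc a ^ 4 = (a ^ 2) ^ 2 := by ring
        _ ≤ (N * t1) ^ 2 := pow_le_pow_left₀ (sq_nonneg a) hs1 2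
        _ = N ^ 2 * t1 ^ 2 := by ring
        _ ≤ N ^ 2 * (N ^ 2 * t2) := mul_le_mul_of_nonneg_left hs2 (by positivity)
    have p3 : a ^ 8 ≤ N ^ 12 * u := by
      calc a ^ 8 = (a ^ 4) ^ 2 := by ring
        _ ≤ (N ^ 2 * (N ^ 2 * t2)) ^ 2 := pow_le_pow_left₀ (by positivity) p2 2
        _ = N ^ 8 * t2 ^ 2 := by ring
        _ ≤ N ^ 8 * (N ^ 4 * u) := mul_le_mul_of_nonneg_left hs3 (by positivity)
        _ = N ^ 12 * u := by ring
    have hNne : N ≠ 0 := ne_of_gt hN0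
    have e : ((N ^ 2)⁻¹ * a) ^ (8 : ℕ) = (N ^ 16)⁻¹ * a ^ 8 := by
      rw [mul_pow, ← inv_pow, ← pow_mul]; norm_num
    rw [e]
    calc (N ^ 16)⁻¹ * a ^ 8 ≤ (N ^ 16)⁻¹ * (N ^ 12 * u) :=
          mul_le_mul_of_nonneg_left p3 (by positivity)
      _ = (N ^ 4)⁻¹ * u := by field_simp
  have hL0 : 0 ≤ (N ^ 2)⁻¹ * a := by positivity
  have hrw : (N ^ 2)⁻¹ * a = (((N ^ 2)⁻¹ * a) ^ (8 : ℕ)) ^ ((1 : ℝ) / 8) := by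
    rw [← Real.rpow_natCast ((N ^ 2)⁻¹ * a) 8, ← Real.rpow_mul hL0]
    norm_num
  rw [hrw]
  exact Real.rpow_le_rpow (by positivity) key (by norm_num)

end Helpers

set_option maxHeartbeats 1000000

theorem stmt_6 (d : ℕ) (Γ : Type*) [AddCommGroup Γ] [Fintype Γ]
    (A : Fin 4 → Γ → Matrix (Fin d) (Fin d) ℂ)
    (hbdd : ∀ i x, ‖A i x‖ ≤ 1)
    (hcomm : ∀ i j, i ≠ j → ∀ x y,
      A i x * A j y = A j y * A i x ∧ (A i x)ᴴ * A j y = A j y * (A i x)ᴴ) :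
    ‖(((Fintype.card Γ : ℂ)) ^ 2)⁻¹ •
        ∑ x : Γ, ∑ y : Γ, A 0 y * A 1 x * A 2 (x + y) * A 3 (x + 2 • y)‖
      ≤ ‖(((Fintype.card Γ : ℂ)) ^ 4)⁻¹ •
          ∑ x : Γ, ∑ h₁ : Γ, ∑ h₂ : Γ, ∑ h₃ : Γ,
            mDerivM (mDerivM (mDerivM (A 0) h₁) h₂) h₃ x‖ ^ ((1 : ℝ) / 8) := by
  classical
  -- commutation atoms
  have fc : ∀ i j : Fin 4, i ≠ j → ∀ x y, FCmat (A i x) (A j y) :=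
    fun i j hij x y => ⟨(hcomm i j hij x y).1, (hcomm i j hij x y).2⟩
  have fc01 : ∀ x y, FCmat (A 0 x) (A 1 y) := fc 0 1 (by decide)
  have fc02 : ∀ x y, FCmat (A 0 x) (A 2 y) := fc 0 2 (by decide)
  have fc03 : ∀ x y, FCmat (A 0 x) (A 3 y) := fc 0 3 (by decide)
  have fc23 : ∀ x y, FCmat (A 2 x) (A 3 y) := fc 2 3 (by decide)
  set N := (Fintype.card Γ : ℝ) with hNdef
  have hN0 : 0 < N := by
    rw [hNdef]; exact_mod_cast Fintype.card_pos
  -- abbreviations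
  set d0 : Γ → Γ → Matrix (Fin d) (Fin d) ℂ :=
    fun h y => (A 0 y)ᴴ * A 0 (y + h) with hd0def
  set d2f : Γ → Γ → Matrix (Fin d) (Fin d) ℂ :=
    fun h z => (A 2 z)ᴴ * A 2 (z + h) with hd2def
  set d3f : Γ → Γ → Matrix (Fin d) (Fin d) ℂ :=
    fun h w => (A 3 w)ᴴ * A 3 (w + 2 • h) with hd3def
  set d00 : Γ → Γ → Γ → Matrix (Fin d) (Fin d) ℂ :=
    fun h k y => (d0 h y)ᴴ * d0 h (y + k) with hd00def
  set d33f : Γ → Γ → Γ → Matrix (Fin d) (Fin d) ℂ :=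
    fun h k w => (d3f h w)ᴴ * d3f h (w + k) with hd33def
  -- composite commutation facts
  have fd0A2 : ∀ h y w, FCmat (d0 h y) (A 2 w) :=
    fun h y w => FCmat.mul_left ((fc02 y w).hL) (fc02 (y + h) w)
  have fd0A3 : ∀ h y w, FCmat (d0 h y) (A 3 w) :=
    fun h y w => FCmat.mul_left ((fc03 y w).hL) (fc03 (y + h) w)
  have fd0d2 : ∀ h y h' z, FCmat (d0 h y) (d2f h' z) :=
    fun h y h' z => FCmat.mul_right ((fd0A2 h y z).hR) (fd0A2 h y (z + h'))
  have fd0d3 : ∀ h y h' w, FCmat (d0 h y) (d3f h' w) :=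
    fun h y h' w => FCmat.mul_right ((fd0A3 h y w).hR) (fd0A3 h y (w + 2 • h'))
  have fd00A3 : ∀ h k y w, FCmat (d00 h k y) (A 3 w) :=
    fun h k y w => FCmat.mul_left ((fd0A3 h y w).hL) (fd0A3 h (y + k) w)
  have fd00d3 : ∀ h k y h' w, FCmat (d00 h k y) (d3f h' w) :=
    fun h k y h' w => FCmat.mul_right ((fd00A3 h k y w).hR) (fd00A3 h k y (w + 2 • h'))
  have fd00d33 : ∀ h k y h' k' w, FCmat (d00 h k y) (d33f h' k' w) :=
    fun h k y h' k' w =>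
      FCmat.mul_right ((fd00d3 h k y h' w).hR) (fd00d3 h k y h' (w + k'))
  -- main objects
  set C1 : Γ → Matrix (Fin d) (Fin d) ℂ :=
    fun x => ∑ y : Γ, A 0 y * (A 2 (x + y) * A 3 (x + 2 • y)) with hC1def
  set T1 : Matrix (Fin d) (Fin d) ℂ :=
    ∑ x : Γ, ∑ y : Γ, ∑ h : Γ, d0 h y * (d2f h (x + y) * d3f h (x + 2 • y)) with hT1def
  set C2 : Γ → Γ → Matrix (Fin d) (Fin d) ℂ :=
    fun h z => ∑ y : Γ, d0 h y * d3f h (z + y) with hC2def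
  set T2 : Matrix (Fin d) (Fin d) ℂ :=
    ∑ p : Γ × Γ, ∑ y : Γ, ∑ k : Γ, d00 p.1 k y * d33f p.1 k (p.2 + y) with hT2def
  set C3 : Γ → Γ → Matrix (Fin d) (Fin d) ℂ :=
    fun h k => ∑ y : Γ, d00 h k y with hC3def
  set D3 : Γ → Γ → Matrix (Fin d) (Fin d) ℂ :=
    fun h k => ∑ w : Γ, d33f h k w with hD3def
  set U : Matrix (Fin d) (Fin d) ℂ :=
    ∑ x : Γ, ∑ h₁ : Γ, ∑ h₂ : Γ, ∑ h₃ : Γ, (d00 h₁ h₂ x)ᴴ * d00 h₁ h₂ (x + h₃) with hUdef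
  -- norm bounds on atoms
  have hnH : ∀ (i : Fin 4) x, ‖(A i x)ᴴ‖ ≤ 1 := by
    intro i x; rw [Matrix.l2_opNorm_conjTranspose]; exact hbdd i x
  have hnd2 : ∀ h z, ‖d2f h z‖ ≤ 1 := fun h z => norm_mul_le_one' (hnH 2 z) (hbdd 2 _)
  have hnd3 : ∀ h w, ‖d3f h w‖ ≤ 1 := fun h w => norm_mul_le_one' (hnH 3 w) (hbdd 3 _)
  have hnd33 : ∀ h k w, ‖d33f h k w‖ ≤ 1 := fun h k w =>
    norm_mul_le_one' (by rw [Matrix.l2_opNorm_conjTranspose]; exact hnd3 h w) (hnd3 h _)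
  -- Step 1
  have step1split : (∑ x : Γ, ∑ y : Γ, A 0 y * A 1 x * A 2 (x + y) * A 3 (x + 2 • y))
      = ∑ x : Γ, A 1 x * C1 x := by
    refine Finset.sum_congr rfl fun x _ => ?_
    simp only [hC1def]
    rw [Finset.mul_sum]
    refine Finset.sum_congr rfl fun y _ => ?_
    calc A 0 y * A 1 x * A 2 (x + y) * A 3 (x + 2 • y)
        = (A 0 y * A 1 x) * (A 2 (x + y) * A 3 (x + 2 • y)) := by rw [mul_assoc]
      _ = (A 1 x * A 0 y) * (A 2 (x + y) * A 3 (x + 2 • y)) := by rw [(fc01 y x).commute.eq]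
      _ = A 1 x * (A 0 y * (A 2 (x + y) * A 3 (x + 2 • y))) := by rw [mul_assoc]
  have expand1 : (∑ x : Γ, (C1 x)ᴴ * C1 x) = T1 := by
    simp only [hC1def, hT1def]
    refine Finset.sum_congr rfl fun x _ => ?_
    rw [Matrix.conjTranspose_sum, Finset.sum_mul]
    refine Finset.sum_congr rfl fun y _ => ?_
    rw [Finset.mul_sum]
    refine (Fintype.sum_equiv (Equiv.addLeft y) _ _ fun h => ?_).symm
    simp only [hd0def, hd2def, hd3def, Equiv.coe_addLeft]
    rw [show y + h = y + h from rfl]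
    rw [show x + (y + h) = (x + y) + h from (add_assoc x y h).symm,
      show x + 2 • (y + h) = (x + 2 • y) + 2 • h from by rw [smul_add, ← add_assoc]]
    exact (pair6 (A 0 y) (A 2 (x + y)) (A 3 (x + 2 • y)) (A 0 (y + h))
      (A 2 ((x + y) + h)) (A 3 ((x + 2 • y) + 2 • h))
      ((FCmat.mul_right ((fd0A3 h y (x + 2 • y)).hR) ((fd0A2 h y (x + y)).hR)).commute)
      (((FCmat.mul_right (((fc23 (x + y) (x + 2 • y)).symm).hR)
        ((fc23 ((x + y) + h) (x + 2 • y)).symm)).hL).commute)).symm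
  have hs1 : ‖∑ x : Γ, ∑ y : Γ, A 0 y * A 1 x * A 2 (x + y) * A 3 (x + 2 • y)‖ ^ 2
      ≤ N * ‖T1‖ := by
    rw [step1split]
    refine (matrix_cs (fun x => A 1 x) C1).trans ?_
    rw [expand1]
    have hb : ‖∑ x : Γ, A 1 x * (A 1 x)ᴴ‖ ≤ N * 1 :=
      norm_sum_le_card' fun x => norm_mul_le_one' (hbdd 1 x) (hnH 1 x)
    rw [mul_one] at hb
    exact mul_le_mul_of_nonneg_right hb (norm_nonneg _)
  -- Step 2
  have reindex1 : T1 = ∑ p : Γ × Γ, d2f p.1 p.2 * C2 p.1 p.2 := by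
    have e2 : ∀ y h : Γ, (∑ x : Γ, d0 h y * (d2f h (x + y) * d3f h (x + 2 • y)))
        = ∑ z : Γ, d0 h y * (d2f h z * d3f h (z + y)) := by
      intro y h
      refine Fintype.sum_equiv (Equiv.addRight y) _ _ fun x => ?_
      simp only [Equiv.coe_addRight]
      rw [show x + 2 • y = x + y + y from by rw [two_smul, ← add_assoc]]
    have e4 : ∀ h z : Γ, (∑ y : Γ, d0 h y * (d2f h z * d3f h (z + y)))
        = d2f h z * C2 h z := by
      intro h z
      simp only [hC2def]
      rw [Finset.mul_sum]
      refine Finset.sum_congr rfl fun y _ => ?_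
      exact left_comm' ((fd0d2 h y h z).commute)
    calc T1 = ∑ y : Γ, ∑ x : Γ, ∑ h : Γ, d0 h y * (d2f h (x + y) * d3f h (x + 2 • y)) := by
          rw [hT1def]; exact Finset.sum_comm
      _ = ∑ y : Γ, ∑ h : Γ, ∑ x : Γ, d0 h y * (d2f h (x + y) * d3f h (x + 2 • y)) :=
          Finset.sum_congr rfl fun y _ => Finset.sum_comm
      _ = ∑ y : Γ, ∑ h : Γ, ∑ z : Γ, d0 h y * (d2f h z * d3f h (z + y)) :=
          Finset.sum_congr rfl fun y _ => Finset.sum_congr rfl fun h _ => e2 y h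
      _ = ∑ h : Γ, ∑ y : Γ, ∑ z : Γ, d0 h y * (d2f h z * d3f h (z + y)) :=
          Finset.sum_comm
      _ = ∑ h : Γ, ∑ z : Γ, ∑ y : Γ, d0 h y * (d2f h z * d3f h (z + y)) :=
          Finset.sum_congr rfl fun h _ => Finset.sum_comm
      _ = ∑ h : Γ, ∑ z : Γ, d2f h z * C2 h z :=
          Finset.sum_congr rfl fun h _ => Finset.sum_congr rfl fun z _ => e4 h z
      _ = ∑ p : Γ × Γ, d2f p.1 p.2 * C2 p.1 p.2 :=
          (Fintype.sum_prod_type (f := fun p : Γ × Γ => d2f p.1 p.2 * C2 p.1 p.2)).symm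
  have expand2 : (∑ p : Γ × Γ, (C2 p.1 p.2)ᴴ * C2 p.1 p.2) = T2 := by
    rw [hT2def]
    refine Finset.sum_congr rfl fun p _ => ?_
    obtain ⟨h, z⟩ := p
    simp only [hC2def]
    rw [Matrix.conjTranspose_sum, Finset.sum_mul]
    refine Finset.sum_congr rfl fun y _ => ?_
    rw [Finset.mul_sum]
    refine (Fintype.sum_equiv (Equiv.addLeft y) _ _ fun k => ?_).symm
    simp only [hd00def, hd33def, Equiv.coe_addLeft]
    rw [show z + (y + k) = (z + y) + k from (add_assoc z y k).symm]
    exact (pair4 (d0 h y) (d3f h (z + y)) (d0 h (y + k)) (d3f h ((z + y) + k))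
      ((((fd0d3 h y h (z + y)).symm).hL.hR).commute)
      ((((fd0d3 h (y + k) h (z + y)).symm).hL).commute)).symm
  have hs2 : ‖T1‖ ^ 2 ≤ N ^ 2 * ‖T2‖ := by
    rw [reindex1]
    refine (matrix_cs (fun p : Γ × Γ => d2f p.1 p.2) (fun p => C2 p.1 p.2)).trans ?_
    rw [expand2]
    have hb : ‖∑ p : Γ × Γ, d2f p.1 p.2 * (d2f p.1 p.2)ᴴ‖ ≤ (Fintype.card (Γ × Γ) : ℝ) * 1 :=
      norm_sum_le_card' fun p => norm_mul_le_one' (hnd2 p.1 p.2)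
        (by rw [Matrix.l2_opNorm_conjTranspose]; exact hnd2 p.1 p.2)
    have hcard : (Fintype.card (Γ × Γ) : ℝ) = N ^ 2 := by
      rw [Fintype.card_prod]; push_cast; ring
    rw [mul_one, hcard] at hb
    exact mul_le_mul_of_nonneg_right hb (norm_nonneg _)
  -- Step 3
  have reindex2 : T2 = ∑ q : Γ × Γ, D3 q.1 q.2 * C3 q.1 q.2 := by
    have e5 : ∀ h k y : Γ, (∑ z : Γ, d00 h k y * d33f h k (z + y))
        = d00 h k y * D3 h k := by
      intro h k y
      rw [← Finset.mul_sum]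
      congr 1
      rw [hD3def]
      exact Fintype.sum_equiv (Equiv.addRight y) _ _ fun z => rfl
    have e6 : ∀ h k : Γ, Commute (C3 h k) (D3 h k) := by
      intro h k
      rw [hC3def, hD3def]
      exact Commute.sum_left _ _ _ fun y _ =>
        Commute.sum_right _ _ _ fun w _ => (fd00d33 h k y h k w).commute
    calc T2 = ∑ h : Γ, ∑ z : Γ, ∑ y : Γ, ∑ k : Γ, d00 h k y * d33f h k (z + y) := by
          rw [hT2def]
          exact Fintype.sum_prod_type (f := fun p : Γ × Γ =>
            ∑ y : Γ, ∑ k : Γ, d00 p.1 k y * d33f p.1 k (p.2 + y))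
      _ = ∑ h : Γ, ∑ y : Γ, ∑ z : Γ, ∑ k : Γ, d00 h k y * d33f h k (z + y) :=
          Finset.sum_congr rfl fun h _ => Finset.sum_comm
      _ = ∑ h : Γ, ∑ y : Γ, ∑ k : Γ, ∑ z : Γ, d00 h k y * d33f h k (z + y) :=
          Finset.sum_congr rfl fun h _ => Finset.sum_congr rfl fun y _ => Finset.sum_comm
      _ = ∑ h : Γ, ∑ k : Γ, ∑ y : Γ, ∑ z : Γ, d00 h k y * d33f h k (z + y) :=
          Finset.sum_congr rfl fun h _ => Finset.sum_comm
      _ = ∑ h : Γ, ∑ k : Γ, ∑ y : Γ, d00 h k y * D3 h k :=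
          Finset.sum_congr rfl fun h _ => Finset.sum_congr rfl fun k _ =>
            Finset.sum_congr rfl fun y _ => e5 h k y
      _ = ∑ h : Γ, ∑ k : Γ, C3 h k * D3 h k := by
          refine Finset.sum_congr rfl fun h _ => Finset.sum_congr rfl fun k _ => ?_
          rw [← Finset.sum_mul, hC3def]
      _ = ∑ h : Γ, ∑ k : Γ, D3 h k * C3 h k :=
          Finset.sum_congr rfl fun h _ => Finset.sum_congr rfl fun k _ => (e6 h k).eq
      _ = ∑ q : Γ × Γ, D3 q.1 q.2 * C3 q.1 q.2 :=
          (Fintype.sum_prod_type (f := fun q : Γ × Γ => D3 q.1 q.2 * C3 q.1 q.2)).symm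
  have expand3 : (∑ q : Γ × Γ, (C3 q.1 q.2)ᴴ * C3 q.1 q.2) = U := by
    have eU : U = ∑ h : Γ, ∑ k : Γ, ∑ y : Γ, ∑ l : Γ, (d00 h k y)ᴴ * d00 h k (y + l) := by
      rw [hUdef]
      calc (∑ x : Γ, ∑ h₁ : Γ, ∑ h₂ : Γ, ∑ h₃ : Γ, (d00 h₁ h₂ x)ᴴ * d00 h₁ h₂ (x + h₃))
          = ∑ h₁ : Γ, ∑ x : Γ, ∑ h₂ : Γ, ∑ h₃ : Γ, (d00 h₁ h₂ x)ᴴ * d00 h₁ h₂ (x + h₃) :=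
            Finset.sum_comm
        _ = ∑ h₁ : Γ, ∑ h₂ : Γ, ∑ x : Γ, ∑ h₃ : Γ, (d00 h₁ h₂ x)ᴴ * d00 h₁ h₂ (x + h₃) :=
            Finset.sum_congr rfl fun h₁ _ => Finset.sum_comm
    rw [eU]
    rw [show (∑ h : Γ, ∑ k : Γ, ∑ y : Γ, ∑ l : Γ, (d00 h k y)ᴴ * d00 h k (y + l))
        = ∑ q : Γ × Γ, ∑ y : Γ, ∑ l : Γ, (d00 q.1 q.2 y)ᴴ * d00 q.1 q.2 (y + l) from
      (Fintype.sum_prod_type (f := fun q : Γ × Γ =>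
        ∑ y : Γ, ∑ l : Γ, (d00 q.1 q.2 y)ᴴ * d00 q.1 q.2 (y + l))).symm]
    refine Finset.sum_congr rfl fun q _ => ?_
    simp only [hC3def]
    rw [Matrix.conjTranspose_sum, Finset.sum_mul]
    refine Finset.sum_congr rfl fun y _ => ?_
    rw [Finset.mul_sum]
    exact (Fintype.sum_equiv (Equiv.addLeft y) _ _ fun l => rfl).symm
  have hs3 : ‖T2‖ ^ 2 ≤ N ^ 4 * ‖U‖ := by
    rw [reindex2]
    refine (matrix_cs (fun q : Γ × Γ => D3 q.1 q.2) (fun q => C3 q.1 q.2)).trans ?_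
    rw [expand3]
    have hD3n : ∀ h k, ‖D3 h k‖ ≤ N := by
      intro h k
      have := norm_sum_le_card' (M := fun w => d33f h k w) (c := 1) (fun w => hnd33 h k w)
      simpa [hNdef] using this
    have hb : ‖∑ q : Γ × Γ, D3 q.1 q.2 * (D3 q.1 q.2)ᴴ‖ ≤ (Fintype.card (Γ × Γ) : ℝ) * (N * N) := by
      refine norm_sum_le_card' fun q => ?_
      refine (Matrix.l2_opNorm_mul _ _).trans ?_
      have h1 := hD3n q.1 q.2
      have h2 : ‖(D3 q.1 q.2)ᴴ‖ ≤ N := by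
        rw [Matrix.l2_opNorm_conjTranspose]; exact hD3n q.1 q.2
      exact mul_le_mul h1 h2 (norm_nonneg _) (le_of_lt hN0)
    have hcard : (Fintype.card (Γ × Γ) : ℝ) * (N * N) = N ^ 4 := by
      rw [Fintype.card_prod]; push_cast [hNdef]; ring
    rw [hcard] at hb
    exact mul_le_mul_of_nonneg_right hb (norm_nonneg _)
  -- assemble
  have hUgoal : (∑ x : Γ, ∑ h₁ : Γ, ∑ h₂ : Γ, ∑ h₃ : Γ,
      mDerivM (mDerivM (mDerivM (A 0) h₁) h₂) h₃ x) = U := by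
    rw [hUdef]
    rfl
  rw [hUgoal]
  have hnorm1 : ‖(((Fintype.card Γ : ℂ)) ^ 2)⁻¹ •
      ∑ x : Γ, ∑ y : Γ, A 0 y * A 1 x * A 2 (x + y) * A 3 (x + 2 • y)‖
      = (N ^ 2)⁻¹ * ‖∑ x : Γ, ∑ y : Γ, A 0 y * A 1 x * A 2 (x + y) * A 3 (x + 2 • y)‖ := by
    rw [norm_smul, norm_inv, norm_pow, Complex.norm_natCast, hNdef]
  have hnorm2 : ‖(((Fintype.card Γ : ℂ)) ^ 4)⁻¹ • U‖ = (N ^ 4)⁻¹ * ‖U‖ := by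
    rw [norm_smul, norm_inv, norm_pow, Complex.norm_natCast, hNdef]
  rw [hnorm1, hnorm2]
  exact final_arith N _ _ _ _ hN0 (norm_nonneg _) (norm_nonneg _) hs1 hs2 hs3
end

section
/- Varopoulos-type commuting contraction construction: Let Ψ : [n]³ → ℂ be a symmetric tensor (invariant under all permutations of its arguments) with Δ = max over all slices of their operator norm. Define for each i ∈ [n] the (2n+2)×(2n+2) block matrix X_i with block structure (row/column block sizes 1,n,n,1): block (2,1) equals e_i, block (3,2) equals W_i* where W_i = Δ^{−1}·(Ψ(i,j,k))_{j,k}, block (4,3) equals e_i*, and all other blocks zero. Then (a) ‖X_i‖ ≤ 1 for all i; (b) X_i X_j = X_j X_i for all i,j; and (c) X_i X_j X_k has exactly one nonzero entry, in position (2n+2, 1), equal to Δ^{−1}·conj(Ψ(i,j,k)). -/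
open Matrix
open scoped Matrix.Norms.L2Operator

set_option maxHeartbeats 1000000

/-- Index type for the `(2n+2) × (2n+2)` block matrices, with blocks of sizes `1, n, n, 1`. -/
abbrev VIdx (n : ℕ) := Fin 1 ⊕ (Fin n ⊕ (Fin n ⊕ Fin 1))

/-- The Varopoulos block matrix `X_i`: block (2,1) is `e_i`, block (3,2) is `W_i^* ` where
`W_i = Δ⁻¹ (Ψ i j k)_{j,k}`, block (4,3) is `e_i^*`, all other blocks zero. -/
noncomputable def varX (n : ℕ) (Δ : ℝ) (Ψ : Fin n → Fin n → Fin n → ℂ) (i : Fin n) :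
    Matrix (VIdx n) (VIdx n) ℂ :=
  fun a b =>
    match a, b with
    | Sum.inr (Sum.inl j), Sum.inl _ => if j = i then 1 else 0
    | Sum.inr (Sum.inr (Sum.inl k)), Sum.inr (Sum.inl j) =>
        (Δ : ℂ)⁻¹ * (starRingEnd ℂ) (Ψ i j k)
    | Sum.inr (Sum.inr (Sum.inr _)), Sum.inr (Sum.inr (Sum.inl k)) => if k = i then 1 else 0
    | _, _ => 0

noncomputable def varY (n : ℕ) (Δ : ℝ) (Ψ : Fin n → Fin n → Fin n → ℂ) (i j : Fin n) :
    Matrix (VIdx n) (VIdx n) ℂ :=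
  fun a b =>
    match a, b with
    | Sum.inr (Sum.inr (Sum.inl k)), Sum.inl _ => (Δ : ℂ)⁻¹ * (starRingEnd ℂ) (Ψ i j k)
    | Sum.inr (Sum.inr (Sum.inr _)), Sum.inr (Sum.inl j') => (Δ : ℂ)⁻¹ * (starRingEnd ℂ) (Ψ j j' i)
    | _, _ => 0

lemma varX_mul (n : ℕ) (Δ : ℝ) (Ψ : Fin n → Fin n → Fin n → ℂ) (i j : Fin n) :
    varX n Δ Ψ i * varX n Δ Ψ j = varY n Δ Ψ i j := by
  funext a b
  rcases a with a | a | a | a <;> rcases b with b | b | b | b <;>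
    simp [varX, varY, Matrix.mul_apply, Fintype.sum_sum_type]

lemma varX_mul_varY (n : ℕ) (Δ : ℝ) (Ψ : Fin n → Fin n → Fin n → ℂ) (i j k : Fin n) (a b : VIdx n) :
    (varX n Δ Ψ i * varY n Δ Ψ j k) a b =
      if a = Sum.inr (Sum.inr (Sum.inr 0)) ∧ b = Sum.inl 0
      then (Δ : ℂ)⁻¹ * (starRingEnd ℂ) (Ψ j k i) else 0 := by
  rcases a with a | a | a | a <;> rcases b with b | b | b | b <;>
    simp [varX, varY, Matrix.mul_apply, Fintype.sum_sum_type, Fin.fin_one_eq_zero]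

lemma l2norm_le {m p : Type*} [Fintype m] [Fintype p] [DecidableEq m] [DecidableEq p]
    (A : Matrix m p ℂ) {c : ℝ} (hc : 0 ≤ c)
    (h : ∀ x : EuclideanSpace ℂ p, ‖(toEuclideanLin A x : EuclideanSpace ℂ m)‖ ≤ c * ‖x‖) :
    ‖A‖ ≤ c := by
  rw [Matrix.l2_opNorm_def]
  exact ContinuousLinearMap.opNorm_le_bound _ hc h

lemma mulVec_sq_le {p q : Type*} [Fintype p] [Fintype q] [DecidableEq p] [DecidableEq q]
    (B : Matrix p q ℂ) (hB : ‖B‖ ≤ 1) (v : q → ℂ) :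
    ∑ k, ‖(B *ᵥ v) k‖ ^ 2 ≤ ∑ j, ‖v j‖ ^ 2 := by
  have h := B.l2_opNorm_mulVec ((WithLp.equiv 2 (q → ℂ)).symm v)
  have hv : (B *ᵥ ((WithLp.equiv 2 (q → ℂ)).symm v : q → ℂ)) = B *ᵥ v := by
    congr 1
  rw [EuclideanSpace.norm_eq, EuclideanSpace.norm_eq] at h
  have hrfl : ∀ (w : p → ℂ) (x : p),
      ((EuclideanSpace.equiv p ℂ).symm w : EuclideanSpace ℂ p) x = w x := fun w x => rfl
  simp only [hrfl, WithLp.equiv_symm_apply, PiLp.toLp_apply] at h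
  replace h := mul_le_of_le_one_left (Real.sqrt_nonneg _) hB |>.trans' h
  have h1 : (0:ℝ) ≤ ∑ k, ‖(B *ᵥ v) k‖ ^ 2 := by positivity
  have h2 : (0:ℝ) ≤ ∑ j, ‖v j‖ ^ 2 := by positivity
  nlinarith [Real.sq_sqrt h1, Real.sq_sqrt h2, Real.sqrt_nonneg (∑ k, ‖(B *ᵥ v) k‖ ^ 2),
    Real.sqrt_nonneg (∑ j, ‖v j‖ ^ 2), h]

lemma varX_key (n : ℕ) (Δ : ℝ) (Ψ : Fin n → Fin n → Fin n → ℂ) (i : Fin n)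
    (hB : ‖((Δ : ℂ))⁻¹ • (Matrix.of fun j k => Ψ i j k)ᴴ‖ ≤ 1) (v : VIdx n → ℂ) :
    ∑ a, ‖(varX n Δ Ψ i *ᵥ v) a‖ ^ 2 ≤ ∑ b, ‖v b‖ ^ 2 := by
  set B : Matrix (Fin n) (Fin n) ℂ := ((Δ : ℂ))⁻¹ • (Matrix.of fun j k => Ψ i j k)ᴴ with hBdef
  have e1 : ∀ z : Fin 1, (varX n Δ Ψ i *ᵥ v) (Sum.inl z) = 0 := by
    intro z
    simp [Matrix.mulVec, dotProduct, varX, Fintype.sum_sum_type]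
  have e2 : ∀ j, (varX n Δ Ψ i *ᵥ v) (Sum.inr (Sum.inl j)) =
      if j = i then v (Sum.inl 0) else 0 := by
    intro j
    simp [Matrix.mulVec, dotProduct, varX, Fintype.sum_sum_type, ite_mul]
  have e3 : ∀ k, (varX n Δ Ψ i *ᵥ v) (Sum.inr (Sum.inr (Sum.inl k))) =
      (B *ᵥ fun j => v (Sum.inr (Sum.inl j))) k := by
    intro k
    simp [Matrix.mulVec, dotProduct, varX, hBdef, Fintype.sum_sum_type,
      Matrix.smul_apply, Matrix.conjTranspose_apply, smul_eq_mul]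
  have e4 : ∀ z : Fin 1, (varX n Δ Ψ i *ᵥ v) (Sum.inr (Sum.inr (Sum.inr z))) =
      v (Sum.inr (Sum.inr (Sum.inl i))) := by
    intro z
    simp [Matrix.mulVec, dotProduct, varX, Fintype.sum_sum_type, ite_mul]
  have h3 := mulVec_sq_le B hB (fun j => v (Sum.inr (Sum.inl j)))
  rw [Fintype.sum_sum_type, Fintype.sum_sum_type, Fintype.sum_sum_type,
      Fintype.sum_sum_type, Fintype.sum_sum_type, Fintype.sum_sum_type]
  simp only [e1, e2, e3, e4, norm_zero]
  have s2 : ∑ j, ‖if j = i then v (Sum.inl 0) else 0‖ ^ 2 = ‖v (Sum.inl 0)‖ ^ 2 := by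
    simp [apply_ite norm, apply_ite (· ^ 2)]
  have s4 : ‖v (Sum.inr (Sum.inr (Sum.inl i)))‖ ^ 2 ≤
      ∑ k, ‖v (Sum.inr (Sum.inr (Sum.inl k)))‖ ^ 2 :=
    Finset.single_le_sum (f := fun k => ‖v (Sum.inr (Sum.inr (Sum.inl k)))‖ ^ 2)
      (fun k _ => sq_nonneg _) (Finset.mem_univ i)
  simp only [Fin.sum_univ_one]
  linarith [h3, s2, s4, sq_nonneg ‖v (Sum.inr (Sum.inr (Sum.inr 0)))‖]

lemma varX_norm_le (n : ℕ) (Δ : ℝ) (Ψ : Fin n → Fin n → Fin n → ℂ) (i : Fin n)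
    (hΔpos : 0 < Δ) (hM : ‖Matrix.of (fun j k => Ψ i j k)‖ ≤ Δ) :
    ‖varX n Δ Ψ i‖ ≤ 1 := by
  have hB : ‖((Δ : ℂ))⁻¹ • (Matrix.of fun j k => Ψ i j k)ᴴ‖ ≤ 1 := by
    rw [norm_smul, Matrix.l2_opNorm_conjTranspose]
    have : ‖((Δ : ℂ))⁻¹‖ = Δ⁻¹ := by
      rw [norm_inv, Complex.norm_real, Real.norm_of_nonneg hΔpos.le]
    rw [this, ← div_eq_inv_mul, div_le_one hΔpos]
    exact hM
  apply l2norm_le _ zero_le_one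
  intro x
  rw [one_mul, EuclideanSpace.norm_eq, EuclideanSpace.norm_eq]
  apply Real.sqrt_le_sqrt
  have hx : ∀ a, (x : EuclideanSpace ℂ (VIdx n)) a = ((WithLp.equiv 2 (VIdx n → ℂ)) x) a :=
    fun a => rfl
  simp only [Matrix.toEuclideanLin_apply, PiLp.toLp_apply]
  simp only [hx]
  exact varX_key n Δ Ψ i hB ((WithLp.equiv 2 (VIdx n → ℂ)) x)

theorem stmt_11 (n : ℕ) (Ψ : Fin n → Fin n → Fin n → ℂ)
    (hsym : ∀ (σ : Equiv.Perm (Fin 3)) (v : Fin 3 → Fin n),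
      Ψ (v (σ 0)) (v (σ 1)) (v (σ 2)) = Ψ (v 0) (v 1) (v 2))
    (Δ : ℝ) (hΔpos : 0 < Δ)
    (hΔ : IsGreatest {r : ℝ |
        (∃ i, r = ‖Matrix.of (fun j k => Ψ i j k)‖) ∨
        (∃ j, r = ‖Matrix.of (fun i k => Ψ i j k)‖) ∨
        (∃ k, r = ‖Matrix.of (fun i j => Ψ i j k)‖)} Δ) :
    (∀ i, ‖varX n Δ Ψ i‖ ≤ 1) ∧
    (∀ i j, varX n Δ Ψ i * varX n Δ Ψ j = varX n Δ Ψ j * varX n Δ Ψ i) ∧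
    (∀ i j k a b, (varX n Δ Ψ i * varX n Δ Ψ j * varX n Δ Ψ k) a b =
      if a = Sum.inr (Sum.inr (Sum.inr 0)) ∧ b = Sum.inl 0
      then (Δ : ℂ)⁻¹ * (starRingEnd ℂ) (Ψ i j k) else 0) := by
  have h01 : ∀ a b c, Ψ a b c = Ψ b a c := fun a b c => by
    simpa [Equiv.swap_apply_def] using hsym (Equiv.swap 0 1) ![b, a, c]
  have h02 : ∀ a b c, Ψ a b c = Ψ c b a := fun a b c => by
    simpa [Equiv.swap_apply_def] using hsym (Equiv.swap 0 2) ![c, b, a]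
  have h12 : ∀ a b c, Ψ a b c = Ψ a c b := fun a b c => by
    simpa [Equiv.swap_apply_def] using hsym (Equiv.swap 1 2) ![a, c, b]
  refine ⟨fun i => varX_norm_le n Δ Ψ i hΔpos (hΔ.2 (Or.inl ⟨i, rfl⟩)), ?_, ?_⟩
  · intro i j
    rw [varX_mul, varX_mul]
    funext a b
    rcases a with a | a | a | a <;> rcases b with b | b | b | b <;> simp only [varY] <;>
      first
        | rfl
        | rw [h01 i j a]
        | rw [h02 j b i]
  · intro i j k a b
    rw [mul_assoc, varX_mul, varX_mul_varY]
    rw [(h02 j k i).trans (h12 i k j)]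
end

section
/- Let Ψ : [n]³ → ℂ be a symmetric tensor with Δ(Ψ) = max slice operator norm > 0. Then there exist commuting matrices X₁,…,X_n ∈ M_{2n+2}(ℂ) with ‖X_i‖ ≤ 1 such that ‖Σ_{i,j,k} Ψ(i,j,k)·X_i X_j X_k‖ ≥ (Σ_{i,j,k}|Ψ(i,j,k)|²)/Δ(Ψ). -/
open Matrix
open scoped Matrix.Norms.L2Operator

namespace Stmt12Aux

noncomputable section

variable {n : ℕ}

abbrev S (n : ℕ) := Unit ⊕ Fin n ⊕ Fin n ⊕ Unit

def eqS (n : ℕ) : Fin (2 * n + 2) ≃ S n :=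
  (Fintype.equivFinOfCardEq (α := S n) (by simp; omega)).symm

def Y (Ψ : Fin n → Fin n → Fin n → ℂ) (Δ : ℝ) (i : Fin n) : Matrix (S n) (S n) ℂ :=
  Matrix.of fun r c =>
    match r, c with
    | Sum.inr (Sum.inl j), Sum.inl _ => if j = i then 1 else 0
    | Sum.inr (Sum.inr (Sum.inl k)), Sum.inr (Sum.inl j) => (starRingEnd ℂ) (Ψ i j k) / Δ
    | Sum.inr (Sum.inr (Sum.inr _)), Sum.inr (Sum.inr (Sum.inl l)) => if l = i then 1 else 0
    | _, _ => 0

def E (n : ℕ) : Matrix (S n) (S n) ℂ :=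
  Matrix.of fun r c =>
    match r, c with
    | Sum.inr (Sum.inr (Sum.inr _)), Sum.inl _ => 1
    | _, _ => 0

lemma mulY (Ψ : Fin n → Fin n → Fin n → ℂ) (Δ : ℝ) (i j : Fin n) :
    Y Ψ Δ i * Y Ψ Δ j = Matrix.of (fun r c =>
      match r, c with
      | Sum.inr (Sum.inr (Sum.inl k)), Sum.inl _ => (starRingEnd ℂ) (Ψ i j k) / Δ
      | Sum.inr (Sum.inr (Sum.inr _)), Sum.inr (Sum.inl m) => (starRingEnd ℂ) (Ψ j m i) / Δ
      | _, _ => 0) := by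
  ext r c
  rcases r with _ | (jr | (kr | _)) <;> rcases c with _ | (jc | (kc | _)) <;>
    simp [Y, Matrix.mul_apply, Fintype.sum_sum_type, ite_mul, mul_ite,
      Finset.sum_ite_eq, Finset.sum_ite_eq']

lemma commY (Ψ : Fin n → Fin n → Fin n → ℂ) (Δ : ℝ)
    (h12 : ∀ i j k, Ψ j i k = Ψ i j k) (h13 : ∀ i j k, Ψ k j i = Ψ i j k) (i j : Fin n) :
    Y Ψ Δ i * Y Ψ Δ j = Y Ψ Δ j * Y Ψ Δ i := by
  rw [mulY, mulY]
  ext r c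
  rcases r with _ | (jr | (kr | _)) <;> rcases c with _ | (jc | (kc | _)) <;>
    simp only [Matrix.of_apply] <;>
    first
      | rfl
      | rw [h12 i j kr]
      | rw [h13 i jc j]

lemma tripleY (Ψ : Fin n → Fin n → Fin n → ℂ) (Δ : ℝ) (i j k : Fin n) :
    Y Ψ Δ i * Y Ψ Δ j * Y Ψ Δ k = ((starRingEnd ℂ) (Ψ j k i) / Δ) • E n := by
  rw [mulY]
  ext r c
  rcases r with _ | (jr | (kr | _)) <;> rcases c with _ | (jc | (kc | _)) <;>
    simp [Y, E, Matrix.mul_apply, Fintype.sum_sum_type, ite_mul, mul_ite,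
      Finset.sum_ite_eq, Finset.sum_ite_eq']

lemma enorm {m : Type*} [Fintype m] (y : m → ℂ) :
    ‖(EuclideanSpace.equiv m ℂ).symm y‖ = Real.sqrt (∑ r, ‖y r‖ ^ 2) := by
  have hco : ∀ r, ((EuclideanSpace.equiv m ℂ).symm y) r = y r := fun _ => rfl
  rw [EuclideanSpace.norm_eq]
  simp only [hco]

lemma enorm' {m : Type*} [Fintype m] (x : EuclideanSpace ℂ m) :
    ‖x‖ = Real.sqrt (∑ r, ‖x r‖ ^ 2) := by
  rw [EuclideanSpace.norm_eq]

lemma opNorm_le_bound {m l : Type*} [Fintype m] [Fintype l] [DecidableEq l]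
    (A : Matrix m l ℂ) {c : ℝ} (hc : 0 ≤ c)
    (h : ∀ x : EuclideanSpace ℂ l, ‖(EuclideanSpace.equiv m ℂ).symm (A *ᵥ x)‖ ≤ c * ‖x‖) :
    ‖A‖ ≤ c := by
  rw [Matrix.l2_opNorm_def]
  exact ContinuousLinearMap.opNorm_le_bound _ hc h

lemma norm_submatrix_le {m l : Type*} [Fintype m] [Fintype l] [DecidableEq m] [DecidableEq l]
    (A : Matrix m m ℂ) (e : l ≃ m) : ‖A.submatrix e e‖ ≤ ‖A‖ := by
  apply opNorm_le_bound _ (norm_nonneg A)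
  intro x
  have h1 : (A.submatrix ⇑e ⇑e) *ᵥ x = (A *ᵥ ((x : l → ℂ) ∘ e.symm)) ∘ ⇑e :=
    Matrix.submatrix_mulVec_equiv A x ⇑e e
  have h2 : ‖(EuclideanSpace.equiv l ℂ).symm ((A.submatrix e e) *ᵥ (x : l → ℂ))‖ =
      ‖(EuclideanSpace.equiv m ℂ).symm (A *ᵥ ((x : l → ℂ) ∘ e.symm))‖ := by
    rw [enorm, enorm, h1]
    congr 1
    exact Equiv.sum_comp e (fun r => ‖(A *ᵥ ((x : l → ℂ) ∘ e.symm)) r‖ ^ 2)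
  have h3 := A.l2_opNorm_mulVec ((EuclideanSpace.equiv m ℂ).symm ((x : l → ℂ) ∘ e.symm))
  have h4 : ‖(EuclideanSpace.equiv m ℂ).symm ((x : l → ℂ) ∘ e.symm)‖ = ‖x‖ := by
    rw [enorm, enorm' x]
    congr 1
    exact Equiv.sum_comp e.symm (fun r => ‖x r‖ ^ 2)
  calc ‖(EuclideanSpace.equiv l ℂ).symm ((A.submatrix ⇑e ⇑e) *ᵥ x)‖
      = ‖(EuclideanSpace.equiv m ℂ).symm (A *ᵥ ((x : l → ℂ) ∘ e.symm))‖ := h2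
    _ ≤ ‖A‖ * ‖(EuclideanSpace.equiv m ℂ).symm ((x : l → ℂ) ∘ e.symm)‖ := h3
    _ = ‖A‖ * ‖x‖ := by rw [h4]

lemma norm_submatrix_eq {m l : Type*} [Fintype m] [Fintype l] [DecidableEq m] [DecidableEq l]
    (A : Matrix m m ℂ) (e : l ≃ m) : ‖A.submatrix e e‖ = ‖A‖ := by
  refine le_antisymm (norm_submatrix_le A e) ?_
  have h : A = (A.submatrix ⇑e ⇑e).submatrix ⇑e.symm ⇑e.symm := by
    ext r c; simp
  conv_lhs => rw [h]
  exact norm_submatrix_le _ e.symm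

lemma submatrix_sum {m m' l l' ι : Type*} (s : Finset ι) (f : ι → Matrix m m' ℂ)
    (e₁ : l → m) (e₂ : l' → m') :
    (∑ i ∈ s, f i).submatrix e₁ e₂ = ∑ i ∈ s, (f i).submatrix e₁ e₂ := by
  ext r c
  simp [Matrix.sum_apply, Matrix.submatrix_apply]

lemma mulVec_sq_sum_le {m l : Type*} [Fintype m] [Fintype l] [DecidableEq l]
    (B : Matrix m l ℂ) (hB : ‖B‖ ≤ 1) (y : l → ℂ) :
    ∑ k, ‖(B *ᵥ y) k‖ ^ 2 ≤ ∑ j, ‖y j‖ ^ 2 := by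
  have h5 := B.l2_opNorm_mulVec ((EuclideanSpace.equiv l ℂ).symm y)
  rw [enorm, enorm] at h5
  have hdef : (B *ᵥ ((EuclideanSpace.equiv l ℂ).symm y)) = B *ᵥ y := rfl
  rw [hdef] at h5
  have h6 : ‖B‖ * Real.sqrt (∑ j, ‖y j‖ ^ 2) ≤
      Real.sqrt (∑ j, ‖y j‖ ^ 2) := by
    nlinarith [Real.sqrt_nonneg (∑ j, ‖y j‖ ^ 2), norm_nonneg B]
  have h7 := h5.trans h6
  have h8 := pow_le_pow_left₀ (Real.sqrt_nonneg _) h7 2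
  rwa [Real.sq_sqrt (Finset.sum_nonneg fun _ _ => sq_nonneg _),
    Real.sq_sqrt (Finset.sum_nonneg fun _ _ => sq_nonneg _)] at h8

lemma normY_le (Ψ : Fin n → Fin n → Fin n → ℂ) {Δ : ℝ} (hΔpos : 0 < Δ) (i : Fin n)
    (hslice : ‖Matrix.of (fun j k => Ψ i j k)‖ ≤ Δ) : ‖Y Ψ Δ i‖ ≤ 1 := by
  set B : Matrix (Fin n) (Fin n) ℂ :=
    Matrix.of (fun k j => (starRingEnd ℂ) (Ψ i j k) / Δ) with hBdef
  have hB : ‖B‖ ≤ 1 := by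
    have hBeq : B = ((Δ : ℂ))⁻¹ • (Matrix.of (fun j k => Ψ i j k))ᴴ := by
      ext k j
      simp [hBdef, Matrix.conjTranspose_apply, div_eq_inv_mul]
    rw [hBeq, norm_smul, Matrix.l2_opNorm_conjTranspose]
    have h1 : ‖((Δ : ℂ))⁻¹‖ = Δ⁻¹ := by
      rw [norm_inv, Complex.norm_real, Real.norm_of_nonneg hΔpos.le]
    rw [h1]
    calc Δ⁻¹ * ‖Matrix.of (fun j k => Ψ i j k)‖ ≤ Δ⁻¹ * Δ :=
          mul_le_mul_of_nonneg_left hslice (inv_nonneg.mpr hΔpos.le)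
      _ = 1 := inv_mul_cancel₀ hΔpos.ne'
  apply opNorm_le_bound _ zero_le_one
  intro x
  rw [one_mul, enorm, enorm' x]
  apply Real.sqrt_le_sqrt
  have c0 : (Y Ψ Δ i *ᵥ x) (Sum.inl ()) = 0 := by
    simp [Y, Matrix.mulVec, dotProduct, Fintype.sum_sum_type]
  have c1 : ∀ j, (Y Ψ Δ i *ᵥ x) (Sum.inr (Sum.inl j)) =
      if j = i then x (Sum.inl ()) else 0 := by
    intro j
    simp [Y, Matrix.mulVec, dotProduct, Fintype.sum_sum_type, ite_mul]
  have c2 : ∀ k, (Y Ψ Δ i *ᵥ x) (Sum.inr (Sum.inr (Sum.inl k))) =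
      (B *ᵥ (fun j => x (Sum.inr (Sum.inl j)))) k := by
    intro k
    simp [Y, hBdef, Matrix.mulVec, dotProduct, Fintype.sum_sum_type]
  have c3 : (Y Ψ Δ i *ᵥ x) (Sum.inr (Sum.inr (Sum.inr ()))) =
      x (Sum.inr (Sum.inr (Sum.inl i))) := by
    simp [Y, Matrix.mulVec, dotProduct, Fintype.sum_sum_type, ite_mul,
      Finset.sum_ite_eq, Finset.sum_ite_eq']
  have hmid : ∑ k, ‖(B *ᵥ (fun j => x (Sum.inr (Sum.inl j)))) k‖ ^ 2 ≤
      ∑ j, ‖x (Sum.inr (Sum.inl j))‖ ^ 2 :=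
    mulVec_sq_sum_le B hB _
  have hsingle : ‖x (Sum.inr (Sum.inr (Sum.inl i)))‖ ^ 2 ≤
      ∑ k, ‖x (Sum.inr (Sum.inr (Sum.inl k)))‖ ^ 2 :=
    Finset.single_le_sum (f := fun k => ‖x (Sum.inr (Sum.inr (Sum.inl k)))‖ ^ 2)
      (fun _ _ => sq_nonneg _) (Finset.mem_univ i)
  have hz : (0 : ℝ) ≤ ‖x (Sum.inr (Sum.inr (Sum.inr ())))‖ ^ 2 := sq_nonneg _
  simp only [Fintype.sum_sum_type, Finset.univ_unique, Finset.sum_singleton]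
  simp only [c0, c1, c2, c3]
  have hite : ∑ j, ‖if j = i then x (Sum.inl ()) else 0‖ ^ 2 =
      ‖x (Sum.inl ())‖ ^ 2 := by
    simp [apply_ite (fun z : ℂ => ‖z‖), apply_ite (· ^ 2), Finset.sum_ite_eq']
  rw [hite]
  simp only [norm_zero]
  linarith [hmid, hsingle, hz]

lemma norm_smul_E_ge (c : ℂ) : ‖c‖ ≤ ‖c • E n‖ := by
  set x0v : S n → ℂ := fun r => if r = Sum.inl () then 1 else 0 with hx0v
  set x0 : EuclideanSpace ℂ (S n) := (EuclideanSpace.equiv (S n) ℂ).symm x0v with hx0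
  have hx0c : ∀ r, x0 r = x0v r := fun _ => rfl
  have h := (c • E n).l2_opNorm_mulVec x0
  have hv : ∀ r, ((c • E n) *ᵥ x0) r =
      (fun r => match r with | Sum.inr (Sum.inr (Sum.inr _)) => c | _ => 0) r := by
    intro r
    rcases r with _ | (j | (k | _)) <;>
      simp [E, Matrix.mulVec, dotProduct, Fintype.sum_sum_type, hx0c, hx0v,
        Matrix.smul_apply, mul_ite]
  have h1 : ‖(EuclideanSpace.equiv (S n) ℂ).symm ((c • E n) *ᵥ x0)‖ =
      ‖c‖ := by
    rw [enorm]
    have : ∑ r, ‖((c • E n) *ᵥ x0) r‖ ^ 2 =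
        ‖c‖ ^ 2 := by
      simp only [hv]
      simp [Fintype.sum_sum_type]
    rw [this, Real.sqrt_sq (norm_nonneg c)]
  have h2 : ‖x0‖ = 1 := by
    rw [hx0, enorm]
    simp [hx0v, apply_ite (fun z : ℂ => ‖z‖), apply_ite (· ^ 2), Fintype.sum_sum_type]
  rw [h1, h2, mul_one] at h
  exact h

end

end Stmt12Aux

theorem stmt_12 (n : ℕ) (Ψ : Fin n → Fin n → Fin n → ℂ)
    (hsym : ∀ (σ : Equiv.Perm (Fin 3)) (v : Fin 3 → Fin n),
      Ψ (v (σ 0)) (v (σ 1)) (v (σ 2)) = Ψ (v 0) (v 1) (v 2))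
    (Δ : ℝ) (hΔpos : 0 < Δ)
    (hΔ : IsGreatest {r : ℝ |
        (∃ i, r = ‖Matrix.of (fun j k => Ψ i j k)‖) ∨
        (∃ j, r = ‖Matrix.of (fun i k => Ψ i j k)‖) ∨
        (∃ k, r = ‖Matrix.of (fun i j => Ψ i j k)‖)} Δ) :
    ∃ X : Fin n → Matrix (Fin (2 * n + 2)) (Fin (2 * n + 2)) ℂ,
      (∀ i j, X i * X j = X j * X i) ∧
      (∀ i, ‖X i‖ ≤ 1) ∧
      (∑ i : Fin n, ∑ j : Fin n, ∑ k : Fin n, ‖Ψ i j k‖ ^ 2) / Δ ≤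
        ‖∑ i : Fin n, ∑ j : Fin n, ∑ k : Fin n, Ψ i j k • (X i * X j * X k)‖ := by
  classical
  have h12 : ∀ i j k, Ψ j i k = Ψ i j k := fun i j k => by
    simpa [Equiv.swap_apply_def] using hsym (Equiv.swap 0 1) ![i, j, k]
  have h13 : ∀ i j k, Ψ k j i = Ψ i j k := fun i j k => by
    simpa [Equiv.swap_apply_def] using hsym (Equiv.swap 0 2) ![i, j, k]
  have hcyc : ∀ i j k, Ψ j k i = Ψ i j k := fun i j k => by
    simpa using hsym (finRotate 3) ![i, j, k]
  set e := Stmt12Aux.eqS n with he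
  refine ⟨fun i => (Stmt12Aux.Y Ψ Δ i).submatrix e e, ?_, ?_, ?_⟩
  · intro i j
    rw [Matrix.submatrix_mul_equiv, Matrix.submatrix_mul_equiv, Stmt12Aux.commY Ψ Δ h12 h13]
  · intro i
    rw [Stmt12Aux.norm_submatrix_eq]
    exact Stmt12Aux.normY_le Ψ hΔpos i (hΔ.2 (Or.inl ⟨i, rfl⟩))
  · set r : ℝ := ∑ i : Fin n, ∑ j : Fin n, ∑ k : Fin n, ‖Ψ i j k‖ ^ 2 with hr
    have hterm : ∀ i j k : Fin n, Ψ i j k • (Stmt12Aux.Y Ψ Δ i * Stmt12Aux.Y Ψ Δ j * Stmt12Aux.Y Ψ Δ k) =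
        (((‖Ψ i j k‖ ^ 2 : ℝ) : ℂ) / (Δ : ℂ)) • Stmt12Aux.E n := by
      intro i j k
      rw [Stmt12Aux.tripleY, smul_smul, hcyc i j k, ← mul_div_assoc, Complex.mul_conj, ← Complex.sq_norm]
    have hMY : (∑ i : Fin n, ∑ j : Fin n, ∑ k : Fin n,
        Ψ i j k • (Stmt12Aux.Y Ψ Δ i * Stmt12Aux.Y Ψ Δ j * Stmt12Aux.Y Ψ Δ k)) = (((r / Δ : ℝ) : ℂ)) • Stmt12Aux.E n := by
      simp only [hterm, ← Finset.sum_smul]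
      congr 1
      push_cast [hr]
      simp [Finset.sum_div]
    have hX : (∑ i : Fin n, ∑ j : Fin n, ∑ k : Fin n,
        Ψ i j k • ((Stmt12Aux.Y Ψ Δ i).submatrix e e * (Stmt12Aux.Y Ψ Δ j).submatrix e e *
          (Stmt12Aux.Y Ψ Δ k).submatrix e e)) =
        (∑ i : Fin n, ∑ j : Fin n, ∑ k : Fin n,
          Ψ i j k • (Stmt12Aux.Y Ψ Δ i * Stmt12Aux.Y Ψ Δ j * Stmt12Aux.Y Ψ Δ k)).submatrix e e := by
      rw [Stmt12Aux.submatrix_sum]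
      refine Finset.sum_congr rfl fun i _ => ?_
      rw [Stmt12Aux.submatrix_sum]
      refine Finset.sum_congr rfl fun j _ => ?_
      rw [Stmt12Aux.submatrix_sum]
      refine Finset.sum_congr rfl fun k _ => ?_
      rw [Matrix.submatrix_mul_equiv, Matrix.submatrix_mul_equiv]
      ext rr cc
      simp
    rw [hX, Stmt12Aux.norm_submatrix_eq, hMY]
    have hge := Stmt12Aux.norm_smul_E_ge (n := n) (((r / Δ : ℝ) : ℂ))
    have habs : ‖((r / Δ : ℝ) : ℂ)‖ = r / Δ := by
      have h0 : 0 ≤ r := Finset.sum_nonneg fun _ _ => Finset.sum_nonneg fun _ _ =>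
        Finset.sum_nonneg fun _ _ => sq_nonneg _
      rw [Complex.norm_real, Real.norm_of_nonneg (div_nonneg h0 hΔpos.le)]
    rw [habs] at hge
    exact hge
end

section
/- Symmetrization does not increase the maximal slice norm: with Ψ̄ the symmetrization of Ψ as above, the maximum operator norm over all slices of Ψ̄ equals the maximum operator norm over all slices of Ψ, i.e., Δ(Ψ̄) = Δ(Ψ). -/
open Matrix
open scoped Matrix.Norms.L2Operator

/-- The tensor `E(a,b,c) = [a=1][b=2][c=3]` (zero-indexed as `[a=0][b=1][c=2]`). -/
def Etns (a b c : Fin 3) : ℂ :=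
  (if a = 0 then 1 else 0) * (if b = 1 then 1 else 0) * (if c = 2 then 1 else 0)

/-- Symmetrization of a tensor `Ψ : [n]³ → ℂ`, a tensor on `([n]×[3])³`. -/
noncomputable def symTensor {n : ℕ} (Ψ : Fin n → Fin n → Fin n → ℂ)
    (x₁ x₂ x₃ : Fin n × Fin 3) : ℂ :=
  ∑ π : Equiv.Perm (Fin 3),
    Ψ (![x₁, x₂, x₃] (π 0)).1 (![x₁, x₂, x₃] (π 1)).1 (![x₁, x₂, x₃] (π 2)).1 *
      Etns (![x₁, x₂, x₃] (π 0)).2 (![x₁, x₂, x₃] (π 1)).2 (![x₁, x₂, x₃] (π 2)).2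

lemma perm_fin3_univ : (Finset.univ : Finset (Equiv.Perm (Fin 3))) =
    {1, Equiv.swap 0 1, Equiv.swap 0 2, Equiv.swap 1 2,
     Equiv.swap 0 1 * Equiv.swap 1 2, Equiv.swap 1 2 * Equiv.swap 0 1} := by decide

lemma symTensor_eq {n : ℕ} (Ψ : Fin n → Fin n → Fin n → ℂ) (x₁ x₂ x₃ : Fin n × Fin 3) :
    symTensor Ψ x₁ x₂ x₃ =
      Ψ x₁.1 x₂.1 x₃.1 * Etns x₁.2 x₂.2 x₃.2 +
      Ψ x₂.1 x₁.1 x₃.1 * Etns x₂.2 x₁.2 x₃.2 +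
      Ψ x₃.1 x₂.1 x₁.1 * Etns x₃.2 x₂.2 x₁.2 +
      Ψ x₁.1 x₃.1 x₂.1 * Etns x₁.2 x₃.2 x₂.2 +
      Ψ x₂.1 x₃.1 x₁.1 * Etns x₂.2 x₃.2 x₁.2 +
      Ψ x₃.1 x₁.1 x₂.1 * Etns x₃.2 x₁.2 x₂.2 := by
  rw [symTensor, perm_fin3_univ]
  rw [Finset.sum_insert (by decide), Finset.sum_insert (by decide), Finset.sum_insert (by decide),
    Finset.sum_insert (by decide), Finset.sum_insert (by decide), Finset.sum_singleton]
  norm_num [Equiv.swap_apply_def, Equiv.Perm.mul_apply, Fin.ext_iff, Matrix.cons_val_two, Matrix.tail_cons, Matrix.head_cons]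
  ring

lemma opNorm_le' {ι κ : Type*} [Fintype ι] [Fintype κ] [DecidableEq κ]
    (A : Matrix ι κ ℂ) {C : ℝ} (hC : 0 ≤ C)
    (h : ∀ x : EuclideanSpace ℂ κ, ‖(EuclideanSpace.equiv ι ℂ).symm (A *ᵥ x)‖ ≤ C * ‖x‖) :
    ‖A‖ ≤ C := by
  rw [Matrix.l2_opNorm_def]
  exact ContinuousLinearMap.opNorm_le_bound _ hC h

lemma sqnorm_euclid {ι : Type*} [Fintype ι] (x : EuclideanSpace ℂ ι) :
    ‖x‖ ^ 2 = ∑ i, ‖x i‖ ^ 2 := by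
  rw [EuclideanSpace.norm_eq, Real.sq_sqrt]; positivity

lemma sqnorm_euclid' {ι : Type*} [Fintype ι] (f : ι → ℂ) :
    ‖(EuclideanSpace.equiv ι ℂ).symm f‖ ^ 2 = ∑ i, ‖f i‖ ^ 2 :=
  sqnorm_euclid _

lemma opNorm_map_star_le {ι : Type*} [Fintype ι] [DecidableEq ι] (A : Matrix ι ι ℂ) :
    ‖A.map (star : ℂ → ℂ)‖ ≤ ‖A‖ := by
  apply opNorm_le' _ (norm_nonneg A)
  intro x
  set y : EuclideanSpace ℂ ι := (EuclideanSpace.equiv ι ℂ).symm (fun i => star (x i)) with hy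
  have h1 : ‖(EuclideanSpace.equiv ι ℂ).symm (A.map (star : ℂ → ℂ) *ᵥ x)‖
      = ‖(EuclideanSpace.equiv ι ℂ).symm (A *ᵥ y)‖ := by
    rw [EuclideanSpace.norm_eq, EuclideanSpace.norm_eq]
    congr 1
    apply Finset.sum_congr rfl
    intro i _
    have : ((EuclideanSpace.equiv ι ℂ).symm (A.map (star : ℂ → ℂ) *ᵥ x)) i
        = star (((EuclideanSpace.equiv ι ℂ).symm (A *ᵥ y)) i) := by
      show (A.map (star : ℂ → ℂ) *ᵥ x) i = star ((A *ᵥ fun i => star (x i)) i)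
      simp [Matrix.mulVec, dotProduct, Finset.sum_comm, star_sum]
    rw [this, norm_star]
  have h2 : ‖y‖ = ‖x‖ := by
    rw [EuclideanSpace.norm_eq, EuclideanSpace.norm_eq]
    congr 1
    exact Finset.sum_congr rfl fun i _ => by
      show ‖star (x i)‖ ^ 2 = _; rw [norm_star]
  rw [h1, ← h2]
  exact Matrix.l2_opNorm_mulVec A y

lemma opNorm_transpose {ι : Type*} [Fintype ι] [DecidableEq ι] (A : Matrix ι ι ℂ) :
    ‖Aᵀ‖ = ‖A‖ := by
  have key : ∀ B : Matrix ι ι ℂ, ‖Bᵀ‖ ≤ ‖B‖ := by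
    intro B
    have : Bᵀ = (B.map (star : ℂ → ℂ))ᴴ := by
      ext i j; simp [Matrix.conjTranspose_apply]
    rw [this, Matrix.l2_opNorm_conjTranspose]
    exact opNorm_map_star_le B
  exact le_antisymm (key A) (by simpa using key Aᵀ)

def Mblk {n : ℕ} (A : Matrix (Fin n) (Fin n) ℂ) (p q r s : Fin 3) :
    Matrix (Fin n × Fin 3) (Fin n × Fin 3) ℂ :=
  Matrix.of fun x y =>
    (if x.2 = p ∧ y.2 = q then A x.1 y.1 else 0) + (if x.2 = r ∧ y.2 = s then A y.1 x.1 else 0)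

lemma Mblk_mulVec {n : ℕ} (A : Matrix (Fin n) (Fin n) ℂ) (p q r s : Fin 3)
    (x : (Fin n × Fin 3) → ℂ) (i : Fin n) (a : Fin 3) :
    (Mblk A p q r s *ᵥ x) (i, a) =
      (if a = p then (A *ᵥ fun j => x (j, q)) i else 0)
      + (if a = r then (Aᵀ *ᵥ fun j => x (j, s)) i else 0) := by
  by_cases hap : a = p <;> by_cases har : a = r <;>
    simp [Mblk, Matrix.mulVec, dotProduct, Fintype.sum_prod_type_right, hap, har,
      ite_and, Finset.sum_add_distrib, add_mul, ite_mul, zero_mul, Finset.sum_ite_irrel,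
      Finset.sum_const_zero, Finset.sum_ite_eq', mul_comm]

lemma norm_Mblk_le {n : ℕ} (A : Matrix (Fin n) (Fin n) ℂ) {p q r s : Fin 3}
    (hpr : p ≠ r) (hqs : q ≠ s) : ‖Mblk A p q r s‖ ≤ ‖A‖ := by
  apply opNorm_le' _ (norm_nonneg A)
  intro x
  have hb : ‖(EuclideanSpace.equiv (Fin n) ℂ).symm (A *ᵥ fun j => x (j, q))‖
      ≤ ‖A‖ * ‖(EuclideanSpace.equiv (Fin n) ℂ).symm fun j => x (j, q)‖ :=
    Matrix.l2_opNorm_mulVec A ((EuclideanSpace.equiv (Fin n) ℂ).symm (fun j => x (j, q)))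
  have hc : ‖(EuclideanSpace.equiv (Fin n) ℂ).symm (Aᵀ *ᵥ fun j => x (j, s))‖
      ≤ ‖Aᵀ‖ * ‖(EuclideanSpace.equiv (Fin n) ℂ).symm fun j => x (j, s)‖ :=
    Matrix.l2_opNorm_mulVec Aᵀ ((EuclideanSpace.equiv (Fin n) ℂ).symm (fun j => x (j, s)))
  rw [opNorm_transpose] at hc
  have hL : ‖(EuclideanSpace.equiv (Fin n × Fin 3) ℂ).symm (Mblk A p q r s *ᵥ x)‖ ^ 2
      = ‖(EuclideanSpace.equiv (Fin n) ℂ).symm (A *ᵥ fun j => x (j, q))‖ ^ 2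
        + ‖(EuclideanSpace.equiv (Fin n) ℂ).symm (Aᵀ *ᵥ fun j => x (j, s))‖ ^ 2 := by
    rw [sqnorm_euclid', sqnorm_euclid', sqnorm_euclid', Fintype.sum_prod_type,
      ← Finset.sum_add_distrib]
    refine Finset.sum_congr rfl fun i _ => ?_
    have key : ∀ a : Fin 3, ‖(Mblk A p q r s *ᵥ x) (i, a)‖ ^ 2 =
        (if a = p then ‖(A *ᵥ fun j => x (j, q)) i‖ ^ 2 else 0) +
        (if a = r then ‖(Aᵀ *ᵥ fun j => x (j, s)) i‖ ^ 2 else 0) := by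
      intro a
      rw [Mblk_mulVec]
      by_cases h1 : a = p <;> by_cases h2 : a = r
      · exact absurd (h1.symm.trans h2) hpr
      all_goals simp [h1, h2, hpr, hpr.symm]
    simp only [key]
    rw [Finset.sum_add_distrib]
    congr 1 <;> simp [Finset.sum_ite_eq']
  have hx : ‖(EuclideanSpace.equiv (Fin n) ℂ).symm (fun j => x (j, q))‖ ^ 2
      + ‖(EuclideanSpace.equiv (Fin n) ℂ).symm (fun j => x (j, s))‖ ^ 2 ≤ ‖x‖ ^ 2 := by
    rw [sqnorm_euclid', sqnorm_euclid', sqnorm_euclid x, Fintype.sum_prod_type,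
      ← Finset.sum_add_distrib]
    refine Finset.sum_le_sum fun i _ => ?_
    have : ‖x (i, q)‖ ^ 2 + ‖x (i, s)‖ ^ 2
        = ∑ a : Fin 3, ((if a = q then ‖x (i, a)‖ ^ 2 else 0) +
            (if a = s then ‖x (i, a)‖ ^ 2 else 0)) := by
      rw [Finset.sum_add_distrib]
      simp [Finset.sum_ite_eq']
    rw [this]
    refine Finset.sum_le_sum fun a _ => ?_
    by_cases h1 : a = q <;> by_cases h2 : a = s
    · exact absurd (h1.symm.trans h2) hqs
    all_goals simp [h1, h2, hqs, hqs.symm] <;> positivity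
  refine le_of_pow_le_pow_left₀ two_ne_zero (by positivity) ?_
  rw [hL, mul_pow]
  nlinarith [norm_nonneg ((EuclideanSpace.equiv (Fin n) ℂ).symm (fun j => x (j, q))),
    norm_nonneg ((EuclideanSpace.equiv (Fin n) ℂ).symm (fun j => x (j, s))),
    norm_nonneg ((EuclideanSpace.equiv (Fin n) ℂ).symm (A *ᵥ fun j => x (j, q))),
    norm_nonneg ((EuclideanSpace.equiv (Fin n) ℂ).symm (Aᵀ *ᵥ fun j => x (j, s))),
    norm_nonneg A, norm_nonneg x, hb, hc, hx, sq_nonneg ‖A‖]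

lemma le_norm_Mblk {n : ℕ} (A : Matrix (Fin n) (Fin n) ℂ) {p q r s : Fin 3}
    (hqs : q ≠ s) : ‖A‖ ≤ ‖Mblk A p q r s‖ := by
  apply opNorm_le' _ (norm_nonneg _)
  intro x
  set y : EuclideanSpace ℂ (Fin n × Fin 3) :=
    (EuclideanSpace.equiv _ ℂ).symm (fun z => if z.2 = q then x z.1 else 0) with hy
  have hMy : ‖(EuclideanSpace.equiv (Fin n × Fin 3) ℂ).symm (Mblk A p q r s *ᵥ y)‖
      ≤ ‖Mblk A p q r s‖ * ‖y‖ := Matrix.l2_opNorm_mulVec _ y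
  have hyx : ‖y‖ = ‖x‖ := by
    have h2 : ‖y‖ ^ 2 = ‖x‖ ^ 2 := by
      rw [hy, sqnorm_euclid', sqnorm_euclid x, Fintype.sum_prod_type]
      refine Finset.sum_congr rfl fun i _ => ?_
      rw [show (fun a : Fin 3 => ‖if a = q then x i else 0‖ ^ 2)
          = fun a : Fin 3 => if a = q then ‖x i‖ ^ 2 else 0 by
        funext a; by_cases h : a = q <;> simp [h]]
      simp [Finset.sum_ite_eq']
    have hn1 : (0:ℝ) ≤ ‖y‖ := norm_nonneg _
    have hn2 : (0:ℝ) ≤ ‖x‖ := norm_nonneg _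
    nlinarith [h2, hn1, hn2]
  have hAx : ‖(EuclideanSpace.equiv (Fin n) ℂ).symm (A *ᵥ x)‖ ^ 2
      ≤ ‖(EuclideanSpace.equiv (Fin n × Fin 3) ℂ).symm (Mblk A p q r s *ᵥ y)‖ ^ 2 := by
    rw [sqnorm_euclid', sqnorm_euclid', Fintype.sum_prod_type]
    have hMyp : ∀ i, (Mblk A p q r s *ᵥ y) (i, p) = (A *ᵥ x) i := by
      intro i
      rw [Mblk_mulVec]
      have e1 : (fun j => y (j, q)) = fun j => x j := by
        funext j; simp [hy]
      have e2 : (fun j => y (j, s)) = fun _ => (0 : ℂ) := by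
        funext j; simp [hy, Ne.symm hqs]
      rw [e1, e2]
      have : Aᵀ *ᵥ (fun _ => (0 : ℂ)) = 0 := by
        ext i; simp [Matrix.mulVec, dotProduct]
      simp [this]
    refine Finset.sum_le_sum fun i _ => ?_
    calc ‖(A *ᵥ x) i‖ ^ 2 = ‖(Mblk A p q r s *ᵥ y) (i, p)‖ ^ 2 := by rw [hMyp]
      _ ≤ ∑ a : Fin 3, ‖(Mblk A p q r s *ᵥ y) (i, a)‖ ^ 2 :=
        Finset.single_le_sum (f := fun a : Fin 3 => ‖(Mblk A p q r s *ᵥ y) (i, a)‖ ^ 2)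
          (fun a _ => by positivity) (Finset.mem_univ p)
  refine le_of_pow_le_pow_left₀ two_ne_zero (by positivity) ?_
  calc ‖(EuclideanSpace.equiv (Fin n) ℂ).symm (A *ᵥ x)‖ ^ 2
      ≤ ‖(EuclideanSpace.equiv (Fin n × Fin 3) ℂ).symm (Mblk A p q r s *ᵥ y)‖ ^ 2 := hAx
    _ ≤ (‖Mblk A p q r s‖ * ‖y‖) ^ 2 := by
        have h0 : (0:ℝ) ≤ ‖(EuclideanSpace.equiv (Fin n × Fin 3) ℂ).symm (Mblk A p q r s *ᵥ y)‖ :=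
          norm_nonneg _
        nlinarith [norm_nonneg (Mblk A p q r s), norm_nonneg y, hMy]
    _ = (‖Mblk A p q r s‖ * ‖x‖) ^ 2 := by rw [hyx]

lemma norm_Mblk {n : ℕ} (A : Matrix (Fin n) (Fin n) ℂ) {p q r s : Fin 3}
    (hpr : p ≠ r) (hqs : q ≠ s) : ‖Mblk A p q r s‖ = ‖A‖ :=
  le_antisymm (norm_Mblk_le A hpr hqs) (le_norm_Mblk A hqs)

section slices
variable {n : ℕ} (Ψ : Fin n → Fin n → Fin n → ℂ) (i : Fin n)

lemma slice1_0 : (Matrix.of fun b c => symTensor Ψ (i, 0) b c)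
    = Mblk (Matrix.of fun j k => Ψ i j k) 1 2 2 1 := by
  ext ⟨i₂, j₂⟩ ⟨i₃, j₃⟩
  rw [Matrix.of_apply, symTensor_eq]
  fin_cases j₂ <;> fin_cases j₃ <;> simp [Etns, Mblk] <;> ring

lemma slice1_1 : (Matrix.of fun b c => symTensor Ψ (i, 1) b c)
    = Mblk (Matrix.of fun j k => Ψ j i k) 0 2 2 0 := by
  ext ⟨i₂, j₂⟩ ⟨i₃, j₃⟩
  rw [Matrix.of_apply, symTensor_eq]
  fin_cases j₂ <;> fin_cases j₃ <;> simp [Etns, Mblk] <;> ring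

lemma slice1_2 : (Matrix.of fun b c => symTensor Ψ (i, 2) b c)
    = Mblk (Matrix.of fun j k => Ψ j k i) 0 1 1 0 := by
  ext ⟨i₂, j₂⟩ ⟨i₃, j₃⟩
  rw [Matrix.of_apply, symTensor_eq]
  fin_cases j₂ <;> fin_cases j₃ <;> simp [Etns, Mblk] <;> ring

lemma slice2_0 : (Matrix.of fun a c => symTensor Ψ a (i, 0) c)
    = Mblk (Matrix.of fun j k => Ψ i j k) 1 2 2 1 := by
  ext ⟨i₂, j₂⟩ ⟨i₃, j₃⟩
  rw [Matrix.of_apply, symTensor_eq]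
  fin_cases j₂ <;> fin_cases j₃ <;> simp [Etns, Mblk] <;> ring

lemma slice2_1 : (Matrix.of fun a c => symTensor Ψ a (i, 1) c)
    = Mblk (Matrix.of fun j k => Ψ j i k) 0 2 2 0 := by
  ext ⟨i₂, j₂⟩ ⟨i₃, j₃⟩
  rw [Matrix.of_apply, symTensor_eq]
  fin_cases j₂ <;> fin_cases j₃ <;> simp [Etns, Mblk] <;> ring

lemma slice2_2 : (Matrix.of fun a c => symTensor Ψ a (i, 2) c)
    = Mblk (Matrix.of fun j k => Ψ j k i) 0 1 1 0 := by
  ext ⟨i₂, j₂⟩ ⟨i₃, j₃⟩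
  rw [Matrix.of_apply, symTensor_eq]
  fin_cases j₂ <;> fin_cases j₃ <;> simp [Etns, Mblk] <;> ring

lemma slice3_0 : (Matrix.of fun a b => symTensor Ψ a b (i, 0))
    = Mblk (Matrix.of fun j k => Ψ i j k) 1 2 2 1 := by
  ext ⟨i₂, j₂⟩ ⟨i₃, j₃⟩
  rw [Matrix.of_apply, symTensor_eq]
  fin_cases j₂ <;> fin_cases j₃ <;> simp [Etns, Mblk] <;> ring

lemma slice3_1 : (Matrix.of fun a b => symTensor Ψ a b (i, 1))
    = Mblk (Matrix.of fun j k => Ψ j i k) 0 2 2 0 := by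
  ext ⟨i₂, j₂⟩ ⟨i₃, j₃⟩
  rw [Matrix.of_apply, symTensor_eq]
  fin_cases j₂ <;> fin_cases j₃ <;> simp [Etns, Mblk] <;> ring

lemma slice3_2 : (Matrix.of fun a b => symTensor Ψ a b (i, 2))
    = Mblk (Matrix.of fun j k => Ψ j k i) 0 1 1 0 := by
  ext ⟨i₂, j₂⟩ ⟨i₃, j₃⟩
  rw [Matrix.of_apply, symTensor_eq]
  fin_cases j₂ <;> fin_cases j₃ <;> simp [Etns, Mblk] <;> ring

end slices

theorem stmt_15 (n : ℕ) (hn : 0 < n) (Ψ : Fin n → Fin n → Fin n → ℂ) :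
    sSup {r : ℝ |
        (∃ a, r = ‖Matrix.of (fun b c => symTensor Ψ a b c)‖) ∨
        (∃ b, r = ‖Matrix.of (fun a c => symTensor Ψ a b c)‖) ∨
        (∃ c, r = ‖Matrix.of (fun a b => symTensor Ψ a b c)‖)}
      = sSup {r : ℝ |
        (∃ i, r = ‖Matrix.of (fun j k => Ψ i j k)‖) ∨
        (∃ j, r = ‖Matrix.of (fun i k => Ψ i j k)‖) ∨
        (∃ k, r = ‖Matrix.of (fun i j => Ψ i j k)‖)} := by
  have hset : {r : ℝ |
        (∃ a, r = ‖Matrix.of (fun b c => symTensor Ψ a b c)‖) ∨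
        (∃ b, r = ‖Matrix.of (fun a c => symTensor Ψ a b c)‖) ∨
        (∃ c, r = ‖Matrix.of (fun a b => symTensor Ψ a b c)‖)}
      = {r : ℝ |
        (∃ i, r = ‖Matrix.of (fun j k => Ψ i j k)‖) ∨
        (∃ j, r = ‖Matrix.of (fun i k => Ψ i j k)‖) ∨
        (∃ k, r = ‖Matrix.of (fun i j => Ψ i j k)‖)} := by
    ext r
    simp only [Set.mem_setOf_eq]
    constructor
    · rintro (⟨⟨i, j⟩, rfl⟩ | ⟨⟨i, j⟩, rfl⟩ | ⟨⟨i, j⟩, rfl⟩) <;> fin_cases j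
      · exact Or.inl ⟨i, by simp only [Fin.zero_eta, Fin.mk_one, Fin.reduceFinMk]; rw [slice1_0, norm_Mblk _ (by decide) (by decide)]⟩
      · exact Or.inr (Or.inl ⟨i, by simp only [Fin.zero_eta, Fin.mk_one, Fin.reduceFinMk]; rw [slice1_1, norm_Mblk _ (by decide) (by decide)]⟩)
      · exact Or.inr (Or.inr ⟨i, by simp only [Fin.zero_eta, Fin.mk_one, Fin.reduceFinMk]; rw [slice1_2, norm_Mblk _ (by decide) (by decide)]⟩)
      · exact Or.inl ⟨i, by simp only [Fin.zero_eta, Fin.mk_one, Fin.reduceFinMk]; rw [slice2_0, norm_Mblk _ (by decide) (by decide)]⟩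
      · exact Or.inr (Or.inl ⟨i, by simp only [Fin.zero_eta, Fin.mk_one, Fin.reduceFinMk]; rw [slice2_1, norm_Mblk _ (by decide) (by decide)]⟩)
      · exact Or.inr (Or.inr ⟨i, by simp only [Fin.zero_eta, Fin.mk_one, Fin.reduceFinMk]; rw [slice2_2, norm_Mblk _ (by decide) (by decide)]⟩)
      · exact Or.inl ⟨i, by simp only [Fin.zero_eta, Fin.mk_one, Fin.reduceFinMk]; rw [slice3_0, norm_Mblk _ (by decide) (by decide)]⟩
      · exact Or.inr (Or.inl ⟨i, by simp only [Fin.zero_eta, Fin.mk_one, Fin.reduceFinMk]; rw [slice3_1, norm_Mblk _ (by decide) (by decide)]⟩)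
      · exact Or.inr (Or.inr ⟨i, by simp only [Fin.zero_eta, Fin.mk_one, Fin.reduceFinMk]; rw [slice3_2, norm_Mblk _ (by decide) (by decide)]⟩)
    · rintro (⟨i, rfl⟩ | ⟨i, rfl⟩ | ⟨i, rfl⟩)
      · exact Or.inl ⟨(i, 0), by rw [slice1_0, norm_Mblk _ (by decide) (by decide)]⟩
      · exact Or.inl ⟨(i, 1), by rw [slice1_1, norm_Mblk _ (by decide) (by decide)]⟩
      · exact Or.inl ⟨(i, 2), by rw [slice1_2, norm_Mblk _ (by decide) (by decide)]⟩
  rw [hset]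
end
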